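/- arXiv:2203.05693 — 8 statements merged into one kernel-verified Lean document; each statement's English description precedes it below -/
import Mathlib

section
/- For every odd integer n ≥ 3 there exists a linear functional E on the real polynomial ring ℝ[x_1,…,x_n] such that: (i) E(1) = 1; (ii) E((x_i² − 1)·p) = 0 for every i ∈ {1,…,n} and every polynomial p of total degree at most n − 3; (iii) E(p²) ≥ 0 for every polynomial p of total degree at most (n−1)/2; and (iv) there is no function μ : {−1,1}^n → ℝ with μ(x) ≥ 0 for all x and ∑_{x ∈ {−1,1}^n} μ(x) = 1 satisfying E(p) = ∑_{x ∈ {−1,1}^n} μ(x)·p(x) for every polynomial p of total degree at most n − 1. -/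
/-!
Write `n = 2m + 1` and take, up to normalisation,
`E p = (4^m - 1) ∑_{x ∈ {±1}ⁿ} p(x) - 4^m (p(𝟙) + p(-𝟙))`: the counting measure on the cube with
the antipodal pair `±𝟙` given the negative mass `-1/(4^m - 1)`. As a combination of point
evaluations on the cube, it kills the ideal of the cube.

If `deg p ≤ m`, then on the cube `p = ∑_{|S| ≤ m} c_S x^S`, so Parseval gives
`∑_x p(x)² = 2ⁿ ∑ c_S²`, while `p(𝟙) = A + B` and `p(-𝟙) = A - B` with `A`, `B` the sums of
the `c_S` over even and odd `|S|`. There are `4^m` sets with `|S| ≤ m`, of both parities, so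
Cauchy–Schwarz on each parity class gives `p(𝟙)² + p(-𝟙)² = 2(A² + B²) ≤ 2(4^m - 1) ∑ c_S²`,
which is exactly `E(p²) ≥ 0`.

The polynomial `∑_{|S| even} x^S` has degree `2m`, and on the cube it equals
`(∏ (1 + xᵢ) + ∏ (1 - xᵢ)) / 2`, i.e. `4^m` at `±𝟙` and `0` elsewhere. It is nonnegative on
the cube, but all its mass sits on the two penalised points, so its `E`-value is negative.
-/

open MvPolynomial Finset

theorem sq_sum_add_sq_sum_ite_neg_le {α : Type*} {s : Finset α} {P : α → Prop}
    [DecidablePred P] (hP : ∃ a ∈ s, P a) (hnP : ∃ a ∈ s, ¬P a) (c : α → ℝ) :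
    (∑ a ∈ s, c a) ^ 2 + (∑ a ∈ s, if P a then c a else -c a) ^ 2 ≤
      2 * (#s - 1) * ∑ a ∈ s, c a ^ 2 := by
  have hcauchySchwarz : ∀ t : Finset α, #t + 1 ≤ #s →
      (∑ a ∈ t, c a) ^ 2 ≤ (#s - 1) * ∑ a ∈ t, c a ^ 2 := fun t ht =>
    sq_sum_le_card_mul_sum_sq.trans <| mul_le_mul_of_nonneg_right
      (by rw [le_sub_iff_add_le]; exact_mod_cast ht) (sum_nonneg fun a _ => sq_nonneg (c a))
  have hcard := card_filter_add_card_filter_not (s := s) P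
  obtain ⟨a, ha, hPa⟩ := hP
  obtain ⟨b, hb, hPb⟩ := hnP
  have hP_pos : 0 < #(s.filter P) := card_pos.mpr ⟨a, mem_filter.mpr ⟨ha, hPa⟩⟩
  have hnP_pos : 0 < #(s.filter fun a => ¬P a) :=
    card_pos.mpr ⟨b, mem_filter.mpr ⟨hb, hPb⟩⟩
  rw [sum_ite, sum_neg_distrib, ← sum_filter_add_sum_filter_not s P c,
    ← sum_filter_add_sum_filter_not s P (fun a => c a ^ 2)]
  linear_combination 2 * hcauchySchwarz _ (by omega : #(s.filter P) + 1 ≤ #s) +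
    2 * hcauchySchwarz _ (by omega : #(s.filter fun a => ¬P a) + 1 ≤ #s)

theorem card_filter_card_le_of_card_eq {ι : Type*} [Fintype ι] {m : ℕ}
    (hι : Fintype.card ι = 2 * m + 1) : #{S : Finset ι | #S ≤ m} = 4 ^ m := by
  rw [card_eq_sum_card_fiberwise (f := card) (t := range (m + 1))
    (fun S hS => mem_range_succ_iff.mpr (mem_filter.mp hS).2), ← Nat.sum_range_choose_halfway,
    ← hι]
  refine sum_congr rfl fun k hk => ?_
  rw [← card_univ, ← card_powersetCard, filter_filter]
  congr 1
  ext S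
  simp only [mem_filter, mem_univ, true_and, mem_powersetCard_univ, and_iff_right_iff_imp]
  exact fun h => h ▸ mem_range_succ_iff.mp hk

theorem two_pow_card_eq_two_mul_four_pow {ι : Type*} [Fintype ι] {m : ℕ}
    (hι : Fintype.card ι = 2 * m + 1) : (2 : ℝ) ^ Fintype.card ι = 2 * 4 ^ m := by
  rw [hι, pow_succ, pow_mul]; norm_num; ring

theorem sq_sum_add_sq_sum_ite_even_le {ι : Type*} [Fintype ι] {m : ℕ}
    (hι : Fintype.card ι = 2 * m + 1) (hm : 1 ≤ m) {c : Finset ι → ℝ}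
    (hc : ∀ S, m < #S → c S = 0) :
    (∑ S, c S) ^ 2 + (∑ S : Finset ι, if Even #S then c S else -c S) ^ 2 ≤
      2 * (4 ^ m - 1) * ∑ S, c S ^ 2 := by
  have hlow : ∀ {f : Finset ι → ℝ}, (∀ S, m < #S → f S = 0) →
      ∑ S with #S ≤ m, f S = ∑ S, f S := fun hf =>
    sum_filter_of_ne fun S _ h => not_lt.mp (mt (hf S) h)
  obtain ⟨i⟩ : Nonempty ι := Fintype.card_pos_iff.mp (by omega)
  have hbound := sq_sum_add_sq_sum_ite_neg_le (s := {S : Finset ι | #S ≤ m})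
    (P := fun S : Finset ι => Even #S) ⟨∅, by simp⟩ ⟨{i}, by simp [hm]⟩ c
  rw [hlow hc, hlow (fun S hS => by simp [hc S hS]), card_filter_card_le_of_card_eq hι,
    Nat.cast_pow, Nat.cast_ofNat] at hbound
  refine hbound.trans (mul_le_mul_of_nonneg_left ?_ ?_)
  · exact sum_le_univ_sum_of_nonneg fun S => sq_nonneg (c S)
  · linarith [one_le_pow₀ (M₀ := ℝ) (n := m) (by norm_num : (1 : ℝ) ≤ 4)]

noncomputable def signCube (ι : Type*) [Fintype ι] [DecidableEq ι] : Finset (ι → ℝ) :=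
  Fintype.piFinset fun _ => {-1, 1}

section SignCube

variable {ι : Type*} [Fintype ι] [DecidableEq ι] {x : ι → ℝ}

theorem mem_signCube : x ∈ signCube ι ↔ ∀ i, x i = -1 ∨ x i = 1 := by
  simp [signCube]

theorem sum_signCube_prod (f : ι → ℝ → ℝ) :
    ∑ x ∈ signCube ι, ∏ i, f i (x i) = ∏ i, (f i (-1) + f i 1) := by
  rw [signCube, ← prod_univ_sum]
  exact prod_congr rfl fun i _ => sum_pair (by norm_num)

theorem pow_eq_ite_odd_of_mem_signCube (hx : x ∈ signCube ι) (i : ι) (k : ℕ) :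
    x i ^ k = if Odd k then x i else 1 := by
  rcases mem_signCube.mp hx i with h | h <;> rw [h]
  · split_ifs with hk
    · exact hk.neg_one_pow
    · exact (Nat.not_odd_iff_even.mp hk).neg_one_pow
  · simp

theorem sum_signCube_prod_mul_prod (S T : Finset ι) :
    ∑ x ∈ signCube ι, (∏ i ∈ S, x i) * ∏ i ∈ T, x i =
      if S = T then 2 ^ Fintype.card ι else 0 := by
  have hprod : ∀ x : ι → ℝ, (∏ i ∈ S, x i) * ∏ i ∈ T, x i =
      ∏ i, (if i ∈ S then x i else 1) * (if i ∈ T then x i else 1) := fun x => by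
    rw [prod_mul_distrib, prod_ite_mem, prod_ite_mem, univ_inter, univ_inter]
  simp_rw [hprod]
  rw [sum_signCube_prod (fun i a => (if i ∈ S then a else 1) * (if i ∈ T then a else 1))]
  split_ifs with hST
  · subst hST
    rw [← card_univ, ← prod_const]
    exact prod_congr rfl fun i _ => by split_ifs <;> norm_num
  · obtain ⟨i, hi⟩ : ∃ i, ¬(i ∈ S ↔ i ∈ T) := by
      by_contra! h; exact hST (ext h)
    exact prod_eq_zero (mem_univ i) (by by_cases hS : i ∈ S <;> simp_all)

theorem sum_signCube_sq_sum_mul_prod (c : Finset ι → ℝ) :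
    ∑ x ∈ signCube ι, (∑ S, c S * ∏ i ∈ S, x i) ^ 2 =
      2 ^ Fintype.card ι * ∑ S, c S ^ 2 := by
  simp_rw [sq, sum_mul_sum, mul_mul_mul_comm]
  rw [sum_comm]
  simp_rw [sum_comm (s := signCube ι), ← mul_sum, sum_signCube_prod_mul_prod, mul_ite, mul_zero,
    sum_ite_eq, if_pos (mem_univ _), mul_sum]
  exact sum_congr rfl fun S _ => by ring

theorem exists_eval_eq_sum_mul_prod (p : MvPolynomial ι ℝ) :
    ∃ c : Finset ι → ℝ, (∀ S, p.totalDegree < #S → c S = 0) ∧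
      ∀ x ∈ signCube ι, eval x p = ∑ S, c S * ∏ i ∈ S, x i := by
  -- since `x i ^ 2 = 1` on the cube, a monomial `x ^ d` there only sees the odd exponents of `d`
  refine ⟨fun S => ∑ d ∈ p.support with ({i | Odd (d i)} : Finset ι) = S, coeff d p,
    fun S hS => ?_, fun x hx => ?_⟩
  · refine sum_eq_zero fun d hd => ?_
    obtain ⟨hd_supp, rfl⟩ := mem_filter.mp hd
    refine absurd (le_totalDegree hd_supp) (not_le.mpr (hS.trans_le ?_))
    rw [Finsupp.sum_fintype _ _ fun _ => rfl, card_eq_sum_ones, sum_filter]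
    exact sum_le_sum fun i _ => by split_ifs with h; exacts [h.pos, Nat.zero_le _]
  · calc eval x p = ∑ d ∈ p.support, coeff d p * ∏ i ∈ {i | Odd (d i)}, x i := by
          simp_rw [eval_eq', pow_eq_ite_odd_of_mem_signCube hx, prod_filter]
      _ = ∑ S, ∑ d ∈ p.support with ({i | Odd (d i)} : Finset ι) = S,
            coeff d p * ∏ i ∈ S, x i := by
          rw [← sum_fiberwise p.support (fun d => ({i | Odd (d i)} : Finset ι))]
          exact sum_congr rfl fun S _ => sum_congr rfl fun d hd => by rw [(mem_filter.mp hd).2]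
      _ = _ := by simp_rw [sum_mul]

theorem card_signCube : #(signCube ι) = 2 ^ Fintype.card ι := by
  simp [signCube, card_pair (show (-1 : ℝ) ≠ 1 by norm_num)]

theorem one_mem_signCube : (1 : ι → ℝ) ∈ signCube ι :=
  mem_signCube.mpr fun _ => Or.inr rfl

theorem neg_one_mem_signCube : (-1 : ι → ℝ) ∈ signCube ι :=
  mem_signCube.mpr fun _ => Or.inl rfl

end SignCube

noncomputable def sumEvenMonomials (ι : Type*) [Fintype ι] : MvPolynomial ι ℝ :=
  ∑ S : Finset ι with Even #S, ∏ i ∈ S, X i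

section EvenMonomials

variable {ι : Type*} [Fintype ι]

theorem totalDegree_sumEvenMonomials_le {m : ℕ} (hι : Fintype.card ι = 2 * m + 1) :
    (sumEvenMonomials ι).totalDegree ≤ 2 * m := by
  refine (totalDegree_finsetSum _ _).trans (Finset.sup_le fun S hS => ?_)
  refine (totalDegree_finsetProd _ _).trans ?_
  have hS_le := hι ▸ card_le_univ S
  have hS_even : Even #S := (mem_filter.mp hS).2
  simp only [totalDegree_X, sum_const, smul_eq_mul, mul_one]
  obtain ⟨k, hk⟩ := hS_even
  omega

theorem two_mul_eval_sumEvenMonomials (x : ι → ℝ) :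
    2 * eval x (sumEvenMonomials ι) = ∏ i, (1 + x i) + ∏ i, (1 - x i) := by
  simp_rw [sub_eq_add_neg, prod_one_add, prod_neg, ← sum_add_distrib, sumEvenMonomials, map_sum,
    map_prod, eval_X, sum_filter, mul_sum, powerset_univ]
  refine sum_congr rfl fun S _ => ?_
  rcases Nat.even_or_odd #S with h | h
  · rw [if_pos h, h.neg_one_pow]; ring
  · rw [if_neg (Nat.not_even_iff_odd.mpr h), h.neg_one_pow]; ring

theorem eval_sumEvenMonomials_nonneg [DecidableEq ι] {x : ι → ℝ} (hx : x ∈ signCube ι) :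
    0 ≤ eval x (sumEvenMonomials ι) := by
  have hfactor : ∀ i, 0 ≤ 1 + x i ∧ 0 ≤ 1 - x i := fun i => by
    rcases mem_signCube.mp hx i with h | h <;> norm_num [h]
  have htwice : 0 ≤ 2 * eval x (sumEvenMonomials ι) := by
    rw [two_mul_eval_sumEvenMonomials]
    exact add_nonneg (prod_nonneg fun i _ => (hfactor i).1) (prod_nonneg fun i _ => (hfactor i).2)
  linarith

end EvenMonomials

noncomputable def grigorievLaurentFunctional (ι : Type*) [Fintype ι] [DecidableEq ι] (m : ℕ) :
    MvPolynomial ι ℝ →ₗ[ℝ] ℝ :=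
  ((4 : ℝ) ^ m - 1) • ∑ x ∈ signCube ι, (aeval x).toLinearMap -
    (4 : ℝ) ^ m • ((aeval 1).toLinearMap + (aeval (-1)).toLinearMap)

section GrigorievLaurentFunctional

variable {ι : Type*} [Fintype ι] [DecidableEq ι] {m : ℕ}

theorem grigorievLaurentFunctional_apply (p : MvPolynomial ι ℝ) :
    grigorievLaurentFunctional ι m p =
      (4 ^ m - 1) * ∑ x ∈ signCube ι, eval x p - 4 ^ m * (eval 1 p + eval (-1) p) := by
  simp [grigorievLaurentFunctional, mul_add]

theorem grigorievLaurentFunctional_mul_X_sq_sub_one (i : ι) (p : MvPolynomial ι ℝ) :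
    grigorievLaurentFunctional ι m ((X i ^ 2 - 1) * p) = 0 := by
  have hvanish : ∀ x ∈ signCube ι, eval x ((X i ^ 2 - 1) * p) = 0 := fun x hx => by
    rcases mem_signCube.mp hx i with h | h <;> simp [h]
  rw [grigorievLaurentFunctional_apply, sum_eq_zero hvanish, hvanish 1 one_mem_signCube,
    hvanish (-1) neg_one_mem_signCube]
  ring

theorem grigorievLaurentFunctional_one (hι : Fintype.card ι = 2 * m + 1) :
    grigorievLaurentFunctional ι m 1 = 2 * 4 ^ m * (4 ^ m - 2) := by
  simp only [grigorievLaurentFunctional_apply, map_one, sum_const, card_signCube, nsmul_eq_mul,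
    Nat.cast_pow, Nat.cast_ofNat, two_pow_card_eq_two_mul_four_pow hι]
  ring

theorem grigorievLaurentFunctional_sumEvenMonomials (hι : Fintype.card ι = 2 * m + 1) :
    grigorievLaurentFunctional ι m (sumEvenMonomials ι) = -2 * 4 ^ m := by
  obtain ⟨i⟩ : Nonempty ι := Fintype.card_pos_iff.mp (by omega)
  have hsum : ∑ x ∈ signCube ι, 2 * eval x (sumEvenMonomials ι) = 2 * (2 * 4 ^ m) := by
    simp_rw [two_mul_eval_sumEvenMonomials, sum_add_distrib, sum_signCube_prod (fun _ a => 1 + a),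
      sum_signCube_prod (fun _ a => 1 - a)]
    norm_num [two_pow_card_eq_two_mul_four_pow hι]
    ring
  have hone : 2 * eval 1 (sumEvenMonomials ι) = 2 * 4 ^ m := by
    have hzero : ∏ i, (1 - (1 : ι → ℝ) i) = 0 := prod_eq_zero (mem_univ i) (by simp)
    rw [two_mul_eval_sumEvenMonomials, hzero]
    norm_num [two_pow_card_eq_two_mul_four_pow hι]
  have hneg : 2 * eval (-1) (sumEvenMonomials ι) = 2 * 4 ^ m := by
    have hzero : ∏ i, (1 + (-1 : ι → ℝ) i) = 0 := prod_eq_zero (mem_univ i) (by simp)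
    rw [two_mul_eval_sumEvenMonomials, hzero]
    norm_num [two_pow_card_eq_two_mul_four_pow hι]
  rw [← mul_sum] at hsum
  rw [grigorievLaurentFunctional_apply]
  linear_combination (4 ^ m - 1 : ℝ) / 2 * hsum - 4 ^ m / 2 * hone - 4 ^ m / 2 * hneg

theorem grigorievLaurentFunctional_sq_nonneg (hι : Fintype.card ι = 2 * m + 1) (hm : 1 ≤ m)
    {p : MvPolynomial ι ℝ} (hp : p.totalDegree ≤ m) :
    0 ≤ grigorievLaurentFunctional ι m (p ^ 2) := by
  obtain ⟨c, hc_deg, hc_eval⟩ := exists_eval_eq_sum_mul_prod p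
  have hparseval : ∑ x ∈ signCube ι, eval x p ^ 2 = 2 * 4 ^ m * ∑ S, c S ^ 2 := by
    rw [sum_congr rfl fun x hx => by rw [hc_eval x hx], sum_signCube_sq_sum_mul_prod,
      two_pow_card_eq_two_mul_four_pow hι]
  have hone : eval 1 p = ∑ S, c S := by
    simp [hc_eval 1 one_mem_signCube]
  have hneg : eval (-1) p = ∑ S : Finset ι, if Even #S then c S else -c S := by
    rw [hc_eval (-1) neg_one_mem_signCube]
    refine sum_congr rfl fun S _ => ?_
    simp only [Pi.neg_apply, Pi.one_apply, prod_const, neg_one_pow_eq_ite, mul_ite, mul_one,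
      mul_neg]
  have hbound := sq_sum_add_sq_sum_ite_even_le hι hm fun S hS => hc_deg S (hp.trans_lt hS)
  have h4 : (0 : ℝ) ≤ 4 ^ m := by positivity
  rw [grigorievLaurentFunctional_apply]
  simp only [map_pow, hparseval, hone, hneg]
  linarith [mul_le_mul_of_nonneg_left hbound h4]

end GrigorievLaurentFunctional

/-- The Grigoriev–Laurent lower bound: for every odd `n ≥ 3` there is a degree `n - 1`
pseudoexpectation over the hypercube `{±1}ⁿ` that is not the expectation operator of any
probability measure on the hypercube. -/
theorem grigoriev_laurent_lower_bound (n : ℕ) (hn : 3 ≤ n) (hodd : Odd n) :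
    ∃ E : MvPolynomial (Fin n) ℝ →ₗ[ℝ] ℝ,
      E 1 = 1 ∧
      (∀ i : Fin n, ∀ p : MvPolynomial (Fin n) ℝ, p.totalDegree ≤ n - 3 →
        E ((X i ^ 2 - 1) * p) = 0) ∧
      (∀ p : MvPolynomial (Fin n) ℝ, p.totalDegree ≤ (n - 1) / 2 → 0 ≤ E (p ^ 2)) ∧
      ¬ ∃ μ : (Fin n → ℝ) → ℝ,
          (∀ x ∈ Fintype.piFinset (fun _ : Fin n => ({-1, 1} : Finset ℝ)), 0 ≤ μ x) ∧
          (∑ x ∈ Fintype.piFinset (fun _ : Fin n => ({-1, 1} : Finset ℝ)), μ x) = 1 ∧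
          (∀ p : MvPolynomial (Fin n) ℝ, p.totalDegree ≤ n - 1 →
            E p = ∑ x ∈ Fintype.piFinset (fun _ : Fin n => ({-1, 1} : Finset ℝ)),
              μ x * eval x p) := by
  obtain ⟨m, rfl⟩ := hodd
  have hι : Fintype.card (Fin (2 * m + 1)) = 2 * m + 1 := Fintype.card_fin _
  have hm : 1 ≤ m := by omega
  set F := grigorievLaurentFunctional (Fin (2 * m + 1)) m
  have hF_one : 0 < F 1 := by
    have : (4 : ℝ) ≤ 4 ^ m := le_self_pow₀ (by norm_num) (by omega)
    rw [grigorievLaurentFunctional_one hι]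
    exact mul_pos (by positivity) (by linarith)
  refine ⟨(F 1)⁻¹ • F, inv_mul_cancel₀ hF_one.ne', fun i p _ => ?_, fun p hp => ?_, ?_⟩
  · simp [F, grigorievLaurentFunctional_mul_X_sq_sub_one]
  · exact mul_nonneg (inv_nonneg.mpr hF_one.le)
      (grigorievLaurentFunctional_sq_nonneg hι hm (by omega))
  · rintro ⟨μ, hμ_nonneg, -, hμ⟩
    have hE_neg : (F 1)⁻¹ * F (sumEvenMonomials _) < 0 := by
      rw [grigorievLaurentFunctional_sumEvenMonomials hι]
      exact mul_neg_of_pos_of_neg (inv_pos.mpr hF_one) (by norm_num)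
    refine hE_neg.not_ge ((sum_nonneg fun x hx => ?_).trans_eq
      (hμ _ (by simpa using totalDegree_sumEvenMonomials_le hι)).symm)
    exact mul_nonneg (hμ_nonneg x hx) (eval_sumEvenMonomials_nonneg hx)
end

section
/- For n ≥ 4 and 1 ≤ d with 2d ≤ n − 1, the explicit eigenvalue formulas satisfy the recursion λ_{n,d} = (n/(n−1)) · λ_{n−2,d−1}, where λ_{m,d} = m! · ∑_{k=d}^{⌊m/2⌋} [ a_{m,k−d}² / ((m−d−k)!·(k−d)!) ] · ∏_{i=0}^{d−1} 1/(m−2i−1−k+d)². -/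
/-!
Write `n = m + 2`, `d = e + 1` and `j = k - e`. After the shift `k ↦ k + 1`, the `k`-th term of
`λ_{m+2,e+1}` is that of `λ_{m,e}` with `a_{m+2,j}` in place of `a_{m,j}`, `(m+2)!` in place of
`m!`, and one extra factor `1/(m+1-j)²` (the factor `i = 0` of the product). The denominators of
`a_{m+2,j}` and `a_{m,j}` telescope to `(m+1)·a_{m+2,j} = (m+1-j)·a_{m,j}`, so the extra factor
turns `a_{m+2,j}²` into `a_{m,j}²/(m+1)²`, and `(m+2)!/(m+1)² = (m+2)/(m+1) · m!`.
-/

open Finset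

noncomputable def glCoeff (m k : ℕ) : ℝ :=
  if Odd k then 0 else
    (-1) ^ (k / 2) * ∏ i ∈ range (k / 2), (2 * i + 1 : ℝ) / ((m : ℝ) - 2 * i - 1)

noncomputable def glEigenvalue (m e : ℕ) : ℝ :=
  (m.factorial : ℝ) * ∑ k ∈ Icc e (m / 2),
    glCoeff m (k - e) ^ 2 / (((m - e - k).factorial * (k - e).factorial : ℕ) : ℝ) *
      ∏ i ∈ range e, 1 / ((m : ℝ) - 2 * i - 1 - k + e) ^ 2

theorem mul_prod_range_sub_two {R : Type*} [CommRing R] (y : R) (t : ℕ) :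
    y * ∏ i ∈ range t, (y - 2 * i - 2) = (y - 2 * t) * ∏ i ∈ range t, (y - 2 * i) := by
  have h := (prod_range_succ' (fun i : ℕ => y - 2 * i) t).symm.trans (prod_range_succ _ t)
  push_cast at h
  simp only [mul_add, mul_one, ← sub_sub, mul_zero, sub_zero] at h
  rw [mul_comm, h, mul_comm]

theorem mul_glCoeff_add_two {m j : ℕ} (hj : j ≤ m) :
    ((m : ℝ) + 1) * glCoeff (m + 2) j = ((m : ℝ) + 1 - j) * glCoeff m j := by
  obtain ⟨t, rfl | rfl⟩ := Nat.even_or_odd' j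
  · have hpos : ∀ i ∈ range t, (0 : ℝ) < m - 2 * i - 1 := fun i hi => by
      have : 2 * i + 1 < m := by have := mem_range.mp hi; omega
      have : ((2 * i + 1 : ℕ) : ℝ) < m := by exact_mod_cast this
      push_cast at this
      linarith
    have hD : ∏ i ∈ range t, ((m : ℝ) - 2 * i - 1) ≠ 0 :=
      prod_ne_zero_iff.mpr fun i hi => (hpos i hi).ne'
    have hD' : ∏ i ∈ range t, ((m : ℝ) + 1 - 2 * i) ≠ 0 :=
      prod_ne_zero_iff.mpr fun i hi => by linarith [hpos i hi]
    have htel := mul_prod_range_sub_two ((m : ℝ) + 1) t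
    have hshift :
        ∏ i ∈ range t, ((m + 1 : ℝ) - 2 * i - 2) = ∏ i ∈ range t, ((m : ℝ) - 2 * i - 1) :=
      prod_congr rfl fun i _ => by ring
    have hshift' :
        ∏ i ∈ range t, (((m + 2 : ℕ) : ℝ) - 2 * i - 1) = ∏ i ∈ range t, ((m : ℝ) + 1 - 2 * i) :=
      prod_congr rfl fun i _ => by push_cast; ring
    have hnodd : ¬Odd (2 * t) := Nat.not_odd_iff_even.mpr (even_two_mul t)
    simp only [glCoeff, if_neg hnodd, Nat.mul_div_cancel_left t two_pos, prod_div_distrib,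
      hshift']
    rw [hshift] at htel
    field_simp
    push_cast
    linear_combination htel
  · simp [glCoeff]

theorem glCoeff_add_two_sq_div {m j : ℕ} (hj : j ≤ m) :
    glCoeff (m + 2) j ^ 2 / ((m : ℝ) + 1 - j) ^ 2 = glCoeff m j ^ 2 / ((m : ℝ) + 1) ^ 2 := by
  have hj' : (j : ℝ) ≤ m := by exact_mod_cast hj
  rw [div_eq_div_iff (by nlinarith) (by positivity)]
  linear_combination (((m : ℝ) + 1) * glCoeff (m + 2) j + ((m : ℝ) + 1 - j) * glCoeff m j) *
    mul_glCoeff_add_two hj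

theorem glEigenvalue_add_two_add_one (m e : ℕ) :
    glEigenvalue (m + 2) (e + 1) = ((m : ℝ) + 2) / ((m : ℝ) + 1) * glEigenvalue m e := by
  have hIcc : Icc (e + 1) ((m + 2) / 2) = (Icc e (m / 2)).map (addRightEmbedding 1) := by
    rw [map_add_right_Icc]; congr 1; omega
  rw [glEigenvalue, glEigenvalue, hIcc, sum_map, mul_sum, mul_sum, mul_sum]
  refine sum_congr rfl fun k hk => ?_
  obtain ⟨hek, hkm⟩ := mem_Icc.mp hk
  rw [addRightEmbedding_apply, show m + 2 - (e + 1) - (k + 1) = m - e - k by omega,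
    show k + 1 - (e + 1) = k - e by omega, prod_range_succ']
  set P := ∏ i ∈ range e, 1 / ((m : ℝ) - 2 * i - 1 - k + e) ^ 2
  set F : ℝ := (((m - e - k).factorial * (k - e).factorial : ℕ) : ℝ)
  set Z : ℝ := (m : ℝ) + 1 - (k - e : ℕ)
  have hprod : ∏ i ∈ range e, 1 / (((m + 2 : ℕ) : ℝ) - 2 * ((i + 1 : ℕ) : ℝ) - 1
      - ((k + 1 : ℕ) : ℝ) + ((e + 1 : ℕ) : ℝ)) ^ 2 = P :=
    prod_congr rfl fun i _ => by push_cast; ring_nf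
  have hfirst :
      ((m + 2 : ℕ) : ℝ) - 2 * ((0 : ℕ) : ℝ) - 1 - ((k + 1 : ℕ) : ℝ) + ((e + 1 : ℕ) : ℝ) = Z := by
    push_cast [Z, Nat.cast_sub hek]; ring
  have hfac : ((m + 2).factorial : ℝ) = ((m : ℝ) + 2) * ((m : ℝ) + 1) * m.factorial := by
    push_cast [Nat.factorial_succ]; ring
  rw [hprod, hfirst]
  calc ((m + 2).factorial : ℝ) * (glCoeff (m + 2) (k - e) ^ 2 / F * (P * (1 / Z ^ 2)))
      = ((m : ℝ) + 2) * ((m : ℝ) + 1) * m.factorial / F * P *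
          (glCoeff (m + 2) (k - e) ^ 2 / Z ^ 2) := by
        rw [hfac]; ring
    _ = _ := by
        rw [glCoeff_add_two_sq_div (by omega)]; field_simp

theorem grigoriev_laurent_eigenvalue_recursion_general (n d : ℕ) (hn : 4 ≤ n) (hd : 1 ≤ d)
    (a : ℕ → ℕ → ℝ)
    (ha : ∀ m k, a m k = if Odd k then 0 else
      (-1) ^ (k / 2) * ∏ i ∈ Finset.range (k / 2), (2 * i + 1 : ℝ) / ((m : ℝ) - 2 * i - 1))
    (lam : ℕ → ℕ → ℝ)
    (hlam : ∀ m e, lam m e = (m.factorial : ℝ) *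
      ∑ k ∈ Finset.Icc e (m / 2),
        a m (k - e) ^ 2 / (((m - e - k).factorial * (k - e).factorial : ℕ) : ℝ) *
          ∏ i ∈ Finset.range e, 1 / ((m : ℝ) - 2 * i - 1 - k + e) ^ 2) :
    lam n d = ((n : ℝ) / ((n : ℝ) - 1)) * lam (n - 2) (d - 1) := by
  obtain rfl : a = glCoeff := funext₂ ha
  obtain rfl : lam = glEigenvalue := funext₂ hlam
  obtain ⟨m, rfl⟩ : ∃ m, n = m + 2 := ⟨n - 2, by omega⟩
  obtain ⟨e, rfl⟩ : ∃ e, d = e + 1 := ⟨d - 1, by omega⟩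
  rw [glEigenvalue_add_two_add_one, Nat.add_sub_cancel, Nat.add_sub_cancel]
  push_cast
  ring

/-- The explicit eigenvalue formulas for the Grigoriev–Laurent pseudomoment matrices satisfy
the recursion `λ_{n,d} = (n/(n−1)) · λ_{n−2,d−1}` for `n ≥ 4` and `1 ≤ d` with `2d ≤ n − 1`. -/
theorem grigoriev_laurent_eigenvalue_recursion (n d : ℕ) (hn : 4 ≤ n) (hd : 1 ≤ d)
    (hdn : 2 * d ≤ n - 1)
    (a : ℕ → ℕ → ℝ)
    (ha : ∀ m k, a m k = if Odd k then 0 else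
      (-1) ^ (k / 2) * ∏ i ∈ Finset.range (k / 2), (2 * i + 1 : ℝ) / ((m : ℝ) - 2 * i - 1))
    (lam : ℕ → ℕ → ℝ)
    (hlam : ∀ m e, lam m e = (m.factorial : ℝ) *
      ∑ k ∈ Finset.Icc e (m / 2),
        a m (k - e) ^ 2 / (((m - e - k).factorial * (k - e).factorial : ℕ) : ℝ) *
          ∏ i ∈ Finset.range e, 1 / ((m : ℝ) - 2 * i - 1 - k + e) ^ 2) :
    lam n d = ((n : ℝ) / ((n : ℝ) - 1)) * lam (n - 2) (d - 1) :=
  grigoriev_laurent_eigenvalue_recursion_general n d hn hd a ha lam hlam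
end

section
/- Let n = 2m be an even positive integer, let B = {x ∈ {−1,1}^n : x_1 + ⋯ + x_n = 0}, and let S ⊆ {1,…,n}. Then |B| = C(n,m); moreover ∑_{x ∈ B} ∏_{i ∈ S} x_i = 0 if |S| is odd, and C(n,|S|) · ∑_{x ∈ B} ∏_{i ∈ S} x_i = (−1)^{|S|/2} · C(m, |S|/2) · C(n,m) if |S| is even. -/
/-! The moments of a permutation-invariant set of vectors depend only on `|S|`, so
averaging over all `S` of size `s` turns `C(n, s) · ∑_{x ∈ B} x^S` into `∑_{x ∈ B} e_s(x)`,
with `e_s` the `s`-th elementary symmetric polynomial. A balanced vector has `m` entries `1`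
and `m` entries `-1`, so `∑_s e_s(x) X^s = (1 + X)^m (1 - X)^m = (1 - X²)^m` for each of them,
and the coefficients of `(1 - X²)^m` give the odd and the even moments at once. -/

open Finset Polynomial

theorem Finset.coeff_prod_one_add_C_mul_X {ι R : Type*} [CommSemiring R] (s : Finset ι)
    (r : ι → R) (k : ℕ) :
    (∏ i ∈ s, (1 + C (r i) * X)).coeff k = ∑ t ∈ s.powersetCard k, ∏ i ∈ t, r i := by
  classical
  simp_rw [prod_one_add, prod_mul_distrib, ← map_prod, prod_const, finsetSum_coeff,
    coeff_C_mul_X_pow, powersetCard_eq_filter, sum_filter, eq_comm]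

theorem Polynomial.coeff_one_sub_X_sq_pow (R : Type*) [CommRing R] (m k : ℕ) :
    ((1 - X ^ 2 : R[X]) ^ m).coeff k =
      if Even k then (-1) ^ (k / 2) * (m.choose (k / 2) : R) else 0 := by
  have h : (1 - X ^ 2 : R[X]) ^ m = expand R 2 (((1 + X) ^ m).comp (C (-1) * X)) := by
    simp [sub_eq_add_neg]
  rw [h, coeff_expand two_pos, comp_C_mul_X_coeff, coeff_one_add_X_pow, mul_comm]
  simp only [even_iff_two_dvd]

section PermInvariant
variable {ι R : Type*} [DecidableEq ι] [CommSemiring R] {B : Finset (ι → R)}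

theorem Finset.sum_prod_eq_of_card_eq
    (hB : ∀ σ : Equiv.Perm ι, ∀ x ∈ B, x ∘ σ ∈ B) {S T : Finset ι} (h : #S = #T) :
    ∑ x ∈ B, ∏ i ∈ S, x i = ∑ x ∈ B, ∏ i ∈ T, x i := by
  obtain ⟨σ, hσ⟩ := (Set.powersetCard.isPretransitive (α := ι) (n := #S)).exists_smul_eq
    ⟨T, h.symm⟩ ⟨S, rfl⟩
  have hST : T.map σ.toEmbedding = S := by
    simpa [Finset.smul_finset_def, Finset.map_eq_image] using congrArg Subtype.val hσ
  refine sum_equiv (σ.symm.arrowCongr (Equiv.refl R)) (fun x => ?_) (fun x _ => ?_)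
  · exact ⟨fun hx => hB σ x hx, fun hx => by simpa [Function.comp_def] using hB σ.symm _ hx⟩
  · simp [← hST, Function.comp_def]

theorem Finset.choose_mul_sum_prod_eq_sum_sum_powersetCard [Fintype ι]
    (hB : ∀ σ : Equiv.Perm ι, ∀ x ∈ B, x ∘ σ ∈ B) (S : Finset ι) :
    (Fintype.card ι).choose #S * ∑ x ∈ B, ∏ i ∈ S, x i =
      ∑ x ∈ B, ∑ t ∈ univ.powersetCard #S, ∏ i ∈ t, x i := by
  rw [sum_comm, sum_congr rfl fun t ht => sum_prod_eq_of_card_eq hB (mem_powersetCard.1 ht).2,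
    sum_const, card_powersetCard, card_univ, nsmul_eq_mul]

end PermInvariant

section signVector
variable {ι R : Type*} [DecidableEq ι] [Ring R]

def signVector (t : Finset ι) : ι → R := fun i => if i ∈ t then 1 else -1

theorem CharZero.neg_one_ne_one [CharZero R] : (-1 : R) ≠ 1 := by norm_num

theorem signVector_eq_one_iff [CharZero R] {t : Finset ι} {i : ι} :
    signVector t i = (1 : R) ↔ i ∈ t := by
  by_cases hi : i ∈ t <;> simp [signVector, hi, CharZero.neg_one_ne_one]

theorem signVector_injective [CharZero R] : Function.Injective (signVector (ι := ι) (R := R)) :=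
  fun s t h => ext fun i => by rw [← signVector_eq_one_iff (R := R), h, signVector_eq_one_iff]

theorem sum_signVector [Fintype ι] (t : Finset ι) : ∑ i, signVector t i = (#t - #tᶜ : R) := by
  simp [signVector, sum_ite, filter_notMem_eq_sdiff, compl_eq_univ_sdiff, sub_eq_add_neg]

theorem prod_one_add_C_mul_X_signVector {R : Type*} [CommRing R] [Fintype ι] (t : Finset ι) :
    ∏ i, (1 + C (signVector t i : R) * X) = (1 + X) ^ #t * (1 - X) ^ #tᶜ := by
  simp [signVector, apply_ite, prod_ite, filter_notMem_eq_sdiff, compl_eq_univ_sdiff,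
    sub_eq_add_neg]

end signVector

section balancedSlice
variable (ι R : Type*) [Fintype ι] [DecidableEq ι] [Ring R] [DecidableEq R]

def balancedSlice : Finset (ι → R) :=
  (Fintype.piFinset fun _ : ι => ({-1, 1} : Finset R)).filter fun x => ∑ i, x i = 0

variable {ι R}

theorem mem_balancedSlice {x : ι → R} :
    x ∈ balancedSlice ι R ↔ (∀ i, x i = -1 ∨ x i = 1) ∧ ∑ i, x i = 0 := by
  simp [balancedSlice]

theorem comp_perm_mem_balancedSlice {x : ι → R} (hx : x ∈ balancedSlice ι R)
    (σ : Equiv.Perm ι) :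
    x ∘ σ ∈ balancedSlice ι R := by
  rw [mem_balancedSlice] at hx ⊢
  exact ⟨fun i => hx.1 (σ i), (Equiv.sum_comp σ x).trans hx.2⟩

theorem balancedSlice_eq_map [CharZero R] {m : ℕ} (h : Fintype.card ι = 2 * m) :
    balancedSlice ι R = (univ.powersetCard m).map ⟨signVector, signVector_injective⟩ := by
  have hcompl (t : Finset ι) : #tᶜ = Fintype.card ι - #t := card_compl t
  ext x
  simp only [mem_balancedSlice, mem_map, mem_powersetCard, subset_univ, true_and,
    Function.Embedding.coeFn_mk]
  constructor
  · rintro ⟨hx, hsum⟩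
    have hx_eq : signVector {i | x i = 1} = x := funext fun i => by
      rcases hx i with hi | hi <;> simp [signVector, hi, CharZero.neg_one_ne_one]
    refine ⟨_, ?_, hx_eq⟩
    rw [← hx_eq, sum_signVector, sub_eq_zero, Nat.cast_inj, hcompl] at hsum
    omega
  · rintro ⟨t, ht, rfl⟩
    refine ⟨fun i => ?_, ?_⟩
    · by_cases hi : i ∈ t <;> simp [signVector, hi]
    · rw [sum_signVector, hcompl, h, ht, show 2 * m - m = m by omega, sub_self]

theorem card_balancedSlice [CharZero R] {m : ℕ} (h : Fintype.card ι = 2 * m) :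
    #(balancedSlice ι R) = (Fintype.card ι).choose m := by
  rw [balancedSlice_eq_map h, card_map, card_powersetCard, card_univ]

end balancedSlice

theorem sum_powersetCard_prod_of_mem_balancedSlice {ι R : Type*} [Fintype ι] [DecidableEq ι]
    [CommRing R] [DecidableEq R] [CharZero R] {m : ℕ} (h : Fintype.card ι = 2 * m)
    {x : ι → R} (hx : x ∈ balancedSlice ι R) (k : ℕ) :
    ∑ t ∈ univ.powersetCard k, ∏ i ∈ t, x i = ((1 - X ^ 2 : R[X]) ^ m).coeff k := by
  rw [balancedSlice_eq_map h] at hx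
  obtain ⟨t, ht, rfl⟩ := mem_map.1 hx
  have ht : #t = m := (mem_powersetCard.1 ht).2
  have htc : #tᶜ = m := by rw [card_compl, h, ht]; omega
  rw [← coeff_prod_one_add_C_mul_X, Function.Embedding.coeFn_mk, prod_one_add_C_mul_X_signVector,
    ht, htc, ← mul_pow]
  ring_nf

theorem balanced_slice_moments_general (n m : ℕ) (hnm : n = 2 * m)
    (S : Finset (Fin n))
    (B : Finset (Fin n → ℝ))
    (hB : B = (Fintype.piFinset fun _ : Fin n => ({-1, 1} : Finset ℝ)).filter
      (fun x => ∑ i, x i = 0)) :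
    B.card = n.choose m ∧
    (Odd S.card → ∑ x ∈ B, ∏ i ∈ S, x i = 0) ∧
    (Even S.card →
      (n.choose S.card : ℝ) * ∑ x ∈ B, ∏ i ∈ S, x i =
        (-1) ^ (S.card / 2) * (m.choose (S.card / 2) : ℝ) * (n.choose m : ℝ)) := by
  have hn : Fintype.card (Fin n) = 2 * m := by rw [Fintype.card_fin, hnm]
  replace hB : B = balancedSlice (Fin n) ℝ := hB
  subst hB
  have hcard : #(balancedSlice (Fin n) ℝ) = n.choose m := by
    rw [card_balancedSlice hn, Fintype.card_fin]
  have hmoment := choose_mul_sum_prod_eq_sum_sum_powersetCard (B := balancedSlice (Fin n) ℝ)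
    (fun σ x hx => comp_perm_mem_balancedSlice hx σ) S
  rw [Fintype.card_fin,
    sum_congr rfl fun x hx => sum_powersetCard_prod_of_mem_balancedSlice hn hx _, sum_const,
    nsmul_eq_mul, coeff_one_sub_X_sq_pow] at hmoment
  refine ⟨hcard, fun hodd => ?_, fun heven => ?_⟩
  · rw [if_neg (Nat.not_even_iff_odd.2 hodd), mul_zero, mul_eq_zero] at hmoment
    have hS : #S ≤ n := by simpa using card_le_univ S
    exact hmoment.resolve_left (Nat.cast_ne_zero.2 (Nat.choose_pos hS).ne')
  · rw [hmoment, if_pos heven, hcard]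
    ring

/-- Moments of the uniform measure on the balanced slice of the hypercube: for `n = 2m`,
the slice `B = {x ∈ {±1}ⁿ : ∑ xᵢ = 0}` has `C(n,m)` points, has odd moments zero, and
satisfies `C(n,|S|) · ∑_{x ∈ B} x^S = (−1)^{|S|/2} C(m,|S|/2) C(n,m)` for `|S|` even. -/
theorem balanced_slice_moments (n m : ℕ) (hm : 1 ≤ m) (hnm : n = 2 * m)
    (S : Finset (Fin n))
    (B : Finset (Fin n → ℝ))
    (hB : B = (Fintype.piFinset fun _ : Fin n => ({-1, 1} : Finset ℝ)).filter
      (fun x => ∑ i, x i = 0)) :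
    B.card = n.choose m ∧
    (Odd S.card → ∑ x ∈ B, ∏ i ∈ S, x i = 0) ∧
    (Even S.card →
      (n.choose S.card : ℝ) * ∑ x ∈ B, ∏ i ∈ S, x i =
        (-1) ^ (S.card / 2) * (m.choose (S.card / 2) : ℝ) * (n.choose m : ℝ)) :=
  balanced_slice_moments_general n m hnm S B hB
end

section
/- Let n ≥ 2 and define a_k ∈ ℝ for k ∈ ℕ by a_k = 0 if k is odd and a_k = (−1)^{k/2} ∏_{i=0}^{k/2−1} (2i+1)/(n−2i−1) if k is even. Then for all integers a, k ≥ 0 with k + a ≤ ⌊n/2⌋, the a-th forward finite difference satisfies ∑_{j=0}^{a} (−1)^j C(a,j) a_{2(k+j)} = a_{2k} · ∏_{i=0}^{a−1} (n−2i)/(n−2k−2i−1). In particular, taking k = 0 and a = d ≤ ⌊n/2⌋, ∑_{j=0}^{d} (−1)^j C(d,j) a_{2j} = ∏_{i=0}^{d−1} (n−2i)/(n−2i−1). -/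
/-! Write `g m = a_{2m}`, so that `g (m + 1) = -g m (2m + 1) / c m` with `c m = n - 2m - 1`.
Up to the sign `(-1)^b`, the alternating binomial sum is the `b`-th forward difference of `g`,
and the formula follows by induction on `b` from `Δ^{b+1} g k = Δ^b g (k + 1) - Δ^b g k`: after
factoring out `g k` and the numerator `∏_{i<b} (n - 2i)`, the two terms have the common
denominator `∏_{i ≤ b} c (k + i)`, and the numerator they leave is
`c (k + b) + (2k + 1) = n - 2b`. -/

open Finset fwdDiff

lemma sum_neg_one_pow_mul_choose_mul_eq_fwdDiff_iter {R : Type*} [CommRing R] (f : ℕ → R)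
    (b k : ℕ) :
    ∑ j ∈ range (b + 1), (-1 : R) ^ j * (b.choose j : R) * f (k + j) =
      (-1) ^ b * Δ_[1] ^[b] f k := by
  rw [fwdDiff_iter_eq_sum_shift, mul_sum]
  refine sum_congr rfl fun j hj => ?_
  have hjb : j + 2 * (b - j) = b + (b - j) := by grind
  have hsign : (-1 : R) ^ b * (-1) ^ (b - j) = (-1) ^ j := by
    rw [← pow_add, ← hjb, pow_add, pow_mul, neg_one_sq, one_pow, mul_one]
  simp only [smul_eq_mul, mul_one, zsmul_eq_mul]
  push_cast
  rw [← hsign]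
  ring

section

variable {K : Type*} [Field K]

/-- The pseudomoment `a_{2m}` for the parameter `n = x`; the odd ones vanish. -/
def pseudomoment (x : K) (m : ℕ) : K :=
  (-1) ^ m * ∏ i ∈ range m, (2 * i + 1) / (x - 2 * i - 1)

lemma pseudomoment_zero (x : K) : pseudomoment x 0 = 1 := by
  simp [pseudomoment]

lemma pseudomoment_succ (x : K) (m : ℕ) :
    pseudomoment x (m + 1) = -pseudomoment x m * ((2 * m + 1) / (x - 2 * m - 1)) := by
  simp only [pseudomoment, prod_range_succ, pow_succ]
  ring

lemma mul_prod_denom_succ_eq_prod_denom_mul (x : K) (b k : ℕ) :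
    (x - 2 * k - 1) * ∏ i ∈ range b, (x - 2 * (k + 1 : ℕ) - 2 * i - 1) =
      (∏ i ∈ range b, (x - 2 * k - 2 * i - 1)) * (x - 2 * k - 2 * b - 1) := by
  rw [← prod_range_succ, prod_range_succ', mul_comm]
  push_cast
  congr 1
  · exact prod_congr rfl fun i _ => by ring
  · ring

theorem fwdDiff_iter_pseudomoment (x : K) (b k : ℕ)
    (hx : ∀ i < b, x - 2 * ((k + i : ℕ) : K) - 1 ≠ 0) :
    Δ_[1] ^[b] (pseudomoment x) k =
      (-1) ^ b * pseudomoment x k * ∏ i ∈ range b, (x - 2 * i) / (x - 2 * k - 2 * i - 1) := by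
  induction b generalizing k with
  | zero => simp
  | succ b ih =>
    have hP : ∏ i ∈ range (b + 1), (x - 2 * k - 2 * i - 1) ≠ 0 :=
      prod_ne_zero_iff.2 fun i hi => by simpa [sub_sub, mul_add] using hx i (mem_range.1 hi)
    have hk : x - 2 * k - 1 ≠ 0 := by simpa using hx 0 b.succ_pos
    have hshift := mul_prod_denom_succ_eq_prod_denom_mul x b k
    rw [prod_range_succ] at hP
    obtain ⟨hPb, hkb⟩ := mul_ne_zero_iff.1 hP
    rw [Function.iterate_succ_apply', fwdDiff, ih k fun i hi => hx i (by omega),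
      ih (k + 1) fun i hi => by simpa [add_assoc, add_comm 1] using hx (i + 1) (by omega),
      pseudomoment_succ]
    simp only [prod_div_distrib, prod_range_succ]
    rw [eq_div_of_mul_eq (a := ∏ i ∈ range b, (x - 2 * ((k + 1 : ℕ) : K) - 2 * i - 1)) hk
      (by rw [mul_comm, hshift])]
    field_simp
    ring

end

theorem grigoriev_laurent_finite_difference_general (n : ℕ)
    (a : ℕ → ℝ)
    (ha : ∀ k, a k = if Odd k then 0 else
      (-1) ^ (k / 2) * ∏ i ∈ Finset.range (k / 2), (2 * i + 1 : ℝ) / ((n : ℝ) - 2 * i - 1)) :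
    (∀ b k : ℕ, k + b ≤ n / 2 →
      ∑ j ∈ Finset.range (b + 1), (-1 : ℝ) ^ j * (b.choose j : ℝ) * a (2 * (k + j)) =
        a (2 * k) * ∏ i ∈ Finset.range b,
          ((n : ℝ) - 2 * i) / ((n : ℝ) - 2 * k - 2 * i - 1)) ∧
    (∀ d : ℕ, d ≤ n / 2 →
      ∑ j ∈ Finset.range (d + 1), (-1 : ℝ) ^ j * (d.choose j : ℝ) * a (2 * j) =
        ∏ i ∈ Finset.range d, ((n : ℝ) - 2 * i) / ((n : ℝ) - 2 * i - 1)) := by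
  have ha_even (m : ℕ) : a (2 * m) = pseudomoment (n : ℝ) m := by
    simp [ha, pseudomoment]
  have hfd (b k : ℕ) (hkb : k + b ≤ n / 2) :
      ∑ j ∈ range (b + 1), (-1 : ℝ) ^ j * (b.choose j : ℝ) * a (2 * (k + j)) =
        a (2 * k) * ∏ i ∈ range b, ((n : ℝ) - 2 * i) / ((n : ℝ) - 2 * k - 2 * i - 1) := by
    have hdenom (i : ℕ) (hi : i < b) : (n : ℝ) - 2 * ((k + i : ℕ) : ℝ) - 1 ≠ 0 := by
      have : ((2 * (k + i) + 1 : ℕ) : ℝ) < n := by exact_mod_cast (by omega : 2 * (k + i) + 1 < n)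
      push_cast at this ⊢
      linarith
    simp only [ha_even]
    rw [sum_neg_one_pow_mul_choose_mul_eq_fwdDiff_iter, fwdDiff_iter_pseudomoment _ b k hdenom,
      ← mul_assoc, ← mul_assoc, ← pow_add, Even.neg_one_pow ⟨b, rfl⟩, one_mul]
  refine ⟨hfd, fun d hd => ?_⟩
  have h := hfd d 0 (by omega)
  rw [ha_even 0, pseudomoment_zero, one_mul] at h
  simpa using h

/-- Finite differences of the Grigoriev–Laurent pseudomoment sequence:
`∑_{j=0}^{a} (−1)^j C(a,j) a_{2(k+j)} = a_{2k} ∏_{i=0}^{a−1} (n−2i)/(n−2k−2i−1)`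
whenever `k + a ≤ ⌊n/2⌋`; in particular for `k = 0` and `a = d ≤ ⌊n/2⌋` the sum equals
`∏_{i=0}^{d−1} (n−2i)/(n−2i−1)`. -/
theorem grigoriev_laurent_finite_difference (n : ℕ) (hn : 2 ≤ n)
    (a : ℕ → ℝ)
    (ha : ∀ k, a k = if Odd k then 0 else
      (-1) ^ (k / 2) * ∏ i ∈ Finset.range (k / 2), (2 * i + 1 : ℝ) / ((n : ℝ) - 2 * i - 1)) :
    (∀ b k : ℕ, k + b ≤ n / 2 →
      ∑ j ∈ Finset.range (b + 1), (-1 : ℝ) ^ j * (b.choose j : ℝ) * a (2 * (k + j)) =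
        a (2 * k) * ∏ i ∈ Finset.range b,
          ((n : ℝ) - 2 * i) / ((n : ℝ) - 2 * k - 2 * i - 1)) ∧
    (∀ d : ℕ, d ≤ n / 2 →
      ∑ j ∈ Finset.range (d + 1), (-1 : ℝ) ^ j * (d.choose j : ℝ) * a (2 * j) =
        ∏ i ∈ Finset.range d, ((n : ℝ) - 2 * i) / ((n : ℝ) - 2 * i - 1)) :=
  grigoriev_laurent_finite_difference_general n a ha
end

section
/- Let n ≥ 2 and 0 ≤ d with 2d ≤ n. For a permutation π of {1,…,n} let c_j(π) be the number of j-element subsets A with π(A) = A (with c_{−1} = 0), and set χ_d = c_d − c_{d−1}. Let A, B ⊆ {1,…,n} with |A| = a ≤ d, |B| = b ≤ d, and min(a,b) < d, and let 0 ≤ k ≤ min(a,b). Then ∑_{π : |π(A) ∩ B| = k} χ_d(π) = 0, where the sum is over all permutations π of {1,…,n} with |π(A) ∩ B| = k. -/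
/-!
`c_j(π)` is the trace of the permutation matrix of `π` on `j`-subsets, so for a weight `w` on `Sₙ`,
`∑ w(π) c_j(π)` is the trace of `G_j(X, Y) = ∑_{π X = Y} w(π)`. If `w` is invariant under right
multiplication by the setwise stabiliser of `A`, then, since the stabiliser acts transitively on the
`j`-sets `X` of a given type `|X ∩ A|`, the row `G_j(X, ·)` only depends on that type:
`G_j = E_j R_j`, with `E_j` the type indicator and `R_j` the rows of one representative per type
(all `|A| + 1` types occur among `j`-sets as long as `|A| ≤ j ≤ n - |A|`). The inclusion matrix
`U` of `(d-1)`-sets in `d`-sets intertwines, `G_d U = U G_{d-1}`, and `U E_{d-1} = E_d M` for the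
bidiagonal type-count matrix `M`, invertible when `|A| < d`. Hence `R_d U = M R_{d-1}` and
`tr G_d = tr (U E_{d-1} M⁻¹ R_d) = tr (E_{d-1} M⁻¹ R_d U) = tr (E_{d-1} R_{d-1}) = tr G_{d-1}`.
The indicator of `|π(A) ∩ B| = k` is right invariant under the stabiliser of `A` and left
invariant under that of `B`; the second case reduces to the first through `π ↦ π⁻¹`.
-/

open Finset Matrix MulAction Equiv
open scoped Pointwise

namespace Equiv.Perm

theorem exists_comp_eq_of_card_fiber_eq {α ι : Type*} [Fintype α] [DecidableEq ι]
    {f g : α → ι} (h : ∀ i, #{x | f x = i} = #{x | g x = i}) : ∃ σ : Perm α, ∀ x, g (σ x) = f x :=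
  ⟨ofFiberEquiv fun i => Fintype.equivOfCardEq <| by
    simpa only [Fintype.card_subtype] using h i, ofFiberEquiv_map _⟩

theorem smul_finset_eq_of_forall_mem_iff {α : Type*} [DecidableEq α] {σ : Perm α}
    {S T : Finset α} (h : ∀ x, σ x ∈ T ↔ x ∈ S) : σ • S = T := by
  ext y
  obtain ⟨x, rfl⟩ := σ.surjective y
  rw [h x]
  exact smul_mem_smul_finset_iff σ

end Equiv.Perm

section Combinatorics

variable {α : Type*} [Fintype α] [DecidableEq α]

theorem exists_mem_stabilizer_smul_eq {A X Y : Finset α} (hXY : #X = #Y)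
    (hA : #(X ∩ A) = #(Y ∩ A)) : ∃ σ ∈ stabilizer (Perm α) A, σ • X = Y := by
  have hX : #(X \ A) = #(Y \ A) := by
    rw [card_sdiff, card_sdiff, inter_comm, hXY, hA, inter_comm]
  have hA' : #(A \ X) = #(A \ Y) := by rw [card_sdiff, card_sdiff, hA]
  have hU : #(X ∪ A) = #(Y ∪ A) := by rw [card_union, card_union, hXY, hA]
  -- `σ` maps each of the four cells `X ∩ A, X \ A, A \ X, (X ∪ A)ᶜ` onto its analogue for `Y`
  obtain ⟨σ, hσ⟩ := Perm.exists_comp_eq_of_card_fiber_eq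
    (f := fun x => (decide (x ∈ X), decide (x ∈ A)))
    (g := fun x => (decide (x ∈ Y), decide (x ∈ A))) fun ⟨b, c⟩ => by
      cases b <;> cases c <;>
        simp only [Prod.mk.injEq, decide_eq_true_eq, decide_eq_false_iff_not, filter_and,
          filter_not, filter_mem_eq_inter, univ_inter, sdiff_inter_right_comm,
          ← inter_sdiff_assoc, inter_univ, sdiff_sdiff_left, card_univ_sdiff, sup_eq_union, hX,
          hA, hA', hU]
  simp only [Prod.mk.injEq, decide_eq_decide] at hσ
  exact ⟨σ, mem_stabilizer_iff.mpr (Perm.smul_finset_eq_of_forall_mem_iff fun x => (hσ x).2),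
    Perm.smul_finset_eq_of_forall_mem_iff fun x => (hσ x).1⟩

theorem exists_card_eq_card_inter_eq (A : Finset α) {t u : ℕ} (ht : t ≤ #A) (hu : u ≤ #Aᶜ) :
    ∃ S : Finset α, #S = t + u ∧ #(S ∩ A) = t := by
  obtain ⟨S₁, hS₁A, rfl⟩ := exists_subset_card_eq ht
  obtain ⟨S₂, hS₂A, rfl⟩ := exists_subset_card_eq hu
  have hdisj : Disjoint S₂ A := subset_compl_iff_disjoint_right.mp hS₂A
  refine ⟨S₁ ∪ S₂, card_union_of_disjoint (hdisj.mono_right hS₁A).symm, ?_⟩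
  rw [union_inter_distrib_right, inter_eq_left.mpr hS₁A, disjoint_iff_inter_eq_empty.mp hdisj,
    union_empty]

theorem sum_powersetCard_subset_eq_sum_erase {M : Type*} [AddCommMonoid M] {j : ℕ}
    {S : Finset α} (hS : #S = j + 1) (f : Finset α → M) :
    ∑ T : Set.powersetCard α j, (if (T : Finset α) ⊆ S then f T else 0) =
      ∑ x ∈ S, f (S.erase x) := by
  rw [← sum_filter]
  symm
  refine sum_bij (fun x hx => ⟨S.erase x, Set.powersetCard.mem_iff.mpr (by
    rw [card_erase_of_mem hx, hS]; rfl)⟩) (fun x _ => by simp [erase_subset]) ?_ ?_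
    (fun _ _ => rfl)
  · intro x hx y hy h
    exact erase_injOn S hx hy (congrArg Subtype.val h)
  · rintro ⟨T, hT⟩ hTS
    rw [mem_filter] at hTS
    dsimp only at hTS ⊢
    have hTj : #T = j := Set.powersetCard.mem_iff.mp hT
    obtain ⟨x, hxS, hxT⟩ :=
      exists_of_ssubset (ssubset_of_subset_of_ne hTS.2 (by rintro rfl; omega))
    refine ⟨x, hxS, Subtype.ext (eq_of_subset_of_card_le (subset_erase.mpr ⟨hTS.2, hxT⟩) ?_).symm⟩
    rw [card_erase_of_mem hxS]
    omega

def numFixedSubsets (j : ℕ) (π : Perm α) : ℕ :=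
  #{S : Finset α | #S = j ∧ π • S = S}

theorem numFixedSubsets_inv (j : ℕ) (π : Perm α) :
    numFixedSubsets j π⁻¹ = numFixedSubsets j π := by
  simp only [numFixedSubsets, inv_smul_eq_iff, eq_comm (b := π • _)]

end Combinatorics

section Matrices

variable {α : Type*} (A : Finset α) (K : Type*) [Field K]

/-- Entry `(τ, s)` is the number of `j`-subsets of type `s` inside a `(j + 1)`-set of type `τ`:
remove one of its `τ` points in `A`, or one of its `j + 1 - τ` points outside `A`. -/
def typeInclusionMatrix (j : ℕ) : Matrix (Fin (#A + 1)) (Fin (#A + 1)) K :=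
  of fun τ s => if (s : ℕ) + 1 = τ then τ else if s = τ then (j + 1 - τ : K) else 0

theorem isUnit_det_typeInclusionMatrix [CharZero K] {j : ℕ} (h : #A ≤ j) :
    IsUnit (typeInclusionMatrix A K j).det := by
  have hlower : (typeInclusionMatrix A K j).IsLowerTriangular := fun τ s (hτs : τ < s) => by
    simp only [typeInclusionMatrix, of_apply, Fin.ext_iff]
    rw [Fin.lt_def] at hτs
    rw [if_neg (by omega), if_neg (by omega)]
  rw [det_of_isLowerTriangular _ hlower, isUnit_iff_ne_zero, prod_ne_zero_iff]
  intro τ _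
  have hτ : (τ : ℕ) < j + 1 := by omega
  simp only [typeInclusionMatrix, of_apply, if_neg (Nat.succ_ne_self _), if_true]
  rw [← Nat.cast_succ, ← Nat.cast_sub hτ.le, Nat.cast_ne_zero]
  omega

variable [DecidableEq α]

def interType (S : Finset α) : Fin (#A + 1) :=
  ⟨#(S ∩ A), Nat.lt_succ_of_le (card_le_card inter_subset_right)⟩

theorem coe_interType (S : Finset α) : (interType A S : ℕ) = #(S ∩ A) := rfl

def typeMatrix (j : ℕ) : Matrix (Set.powersetCard α j) (Fin (#A + 1)) K :=
  of fun S t => if interType A S = t then 1 else 0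

variable (α) in
def inclusionMatrix (j : ℕ) : Matrix (Set.powersetCard α (j + 1)) (Set.powersetCard α j) K :=
  of fun S T => if (T : Finset α) ⊆ S then 1 else 0

variable {A} in
theorem typeMatrix_submatrix_eq_one {j : ℕ} {r : Fin (#A + 1) → Set.powersetCard α j}
    (hr : ∀ t, interType A (r t) = t) : (typeMatrix A K j).submatrix r id = 1 := by
  ext t s
  simp [typeMatrix, one_apply, hr]

variable [Fintype α]

theorem interType_surjective {m : ℕ} (hA : #A ≤ m) (hm : m ≤ #Aᶜ) :
    Function.Surjective fun S : Set.powersetCard α m => interType A S := by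
  intro t
  obtain ⟨S, hS, hSA⟩ := exists_card_eq_card_inter_eq A (u := m - t) (Nat.lt_succ_iff.mp t.2)
    (by omega)
  exact ⟨⟨S, Set.powersetCard.mem_iff.mpr (by omega)⟩, Fin.ext hSA⟩

theorem inclusionMatrix_mul_typeMatrix (j : ℕ) :
    inclusionMatrix α K j * typeMatrix A K j =
      typeMatrix A K (j + 1) * typeInclusionMatrix A K j := by
  ext S s
  simp only [mul_apply, inclusionMatrix, typeMatrix, of_apply, ite_mul, one_mul, zero_mul,
    sum_ite_eq, mem_univ, if_true]
  have hS : #S.1 = j + 1 := S.2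
  rw [sum_powersetCard_subset_eq_sum_erase hS fun T => if interType A T = s then (1 : K) else 0,
    ← sum_filter_add_sum_filter_not _ (· ∈ A)]
  have hin : ∀ x ∈ S.1.filter (· ∈ A),
      interType A (S.1.erase x) = s ↔ (s : ℕ) + 1 = #(S.1 ∩ A) := by
    intro x hx
    rw [mem_filter] at hx
    have := card_pos.mpr ⟨x, mem_inter.mpr hx⟩
    rw [Fin.ext_iff, coe_interType, erase_inter, card_erase_of_mem (mem_inter.mpr hx)]
    omega
  have hout : ∀ x ∈ S.1.filter (· ∉ A),
      interType A (S.1.erase x) = s ↔ (s : ℕ) = #(S.1 ∩ A) := by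
    intro x hx
    rw [mem_filter] at hx
    rw [Fin.ext_iff, coe_interType, erase_inter,
      erase_eq_of_notMem fun h => hx.2 (mem_inter.mp h).2, eq_comm]
  rw [sum_congr rfl fun x hx => if_congr (hin x hx) rfl rfl,
    sum_congr rfl fun x hx => if_congr (hout x hx) rfl rfl, sum_const, sum_const, filter_not,
    filter_mem_eq_inter, card_sdiff_of_subset inter_subset_left, hS]
  have hτ : #(S.1 ∩ A) ≤ j + 1 := (card_le_card inter_subset_left).trans hS.le
  simp only [typeInclusionMatrix, of_apply, Fin.ext_iff, coe_interType]
  by_cases h₁ : (s : ℕ) + 1 = #(S.1 ∩ A)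
  · simp [h₁, show (s : ℕ) ≠ #(S.1 ∩ A) by omega]
  · by_cases h₂ : (s : ℕ) = #(S.1 ∩ A) <;> simp [h₁, h₂, Nat.cast_sub hτ]

variable {K}

def imageWeightMatrix (w : Perm α → K) (j : ℕ) :
    Matrix (Set.powersetCard α j) (Set.powersetCard α j) K :=
  of fun X Y => ∑ π, if π • X = Y then w π else 0

theorem trace_imageWeightMatrix (w : Perm α → K) (j : ℕ) :
    trace (imageWeightMatrix w j) = ∑ π, w π * numFixedSubsets j π := by
  simp only [trace, Matrix.diag, imageWeightMatrix, numFixedSubsets, of_apply, Subtype.ext_iff,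
    Set.powersetCard.coe_smul]
  rw [sum_comm]
  refine sum_congr rfl fun π _ => ?_
  rw [← sum_subtype {S : Finset α | #S = j} (by simp [Set.powersetCard.mem_iff])
    (fun S => if π • S = S then w π else 0), ← sum_filter, filter_filter, sum_const, nsmul_eq_mul,
    mul_comm]

theorem imageWeightMatrix_mul_inclusionMatrix (w : Perm α → K) (j : ℕ) :
    imageWeightMatrix w (j + 1) * inclusionMatrix α K j =
      inclusionMatrix α K j * imageWeightMatrix w j := by
  ext X T
  simp only [mul_apply, imageWeightMatrix, inclusionMatrix, of_apply, sum_mul, mul_sum]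
  rw [sum_comm]
  conv_rhs => rw [sum_comm]
  refine sum_congr rfl fun π _ => ?_
  simp only [ite_zero_mul_ite_zero, smul_eq_iff_eq_inv_smul π (y := T),
    and_comm (b := _ = π⁻¹ • T), ite_and, sum_ite_eq, sum_ite_eq', mem_univ, if_true, mul_one,
    one_mul, Set.powersetCard.coe_smul, subset_smul_finset_iff]

end Matrices

section Invariant

variable {α : Type*} [Fintype α] [DecidableEq α] {K : Type*} [Field K] {A : Finset α}
  {w : Perm α → K}

theorem imageWeightMatrix_apply_eq_of_interType_eq
    (hw : ∀ π, ∀ σ ∈ stabilizer (Perm α) A, w (π * σ) = w π) {j : ℕ}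
    {X Y : Set.powersetCard α j} (h : interType A X = interType A Y) (Z : Set.powersetCard α j) :
    imageWeightMatrix w j X Z = imageWeightMatrix w j Y Z := by
  obtain ⟨σ, hσA, hσ⟩ :=
    exists_mem_stabilizer_smul_eq (X.2.trans Y.2.symm) (congrArg Fin.val h)
  have hσ' : σ • X = Y := Subtype.ext (by rw [Set.powersetCard.coe_smul, hσ])
  simp only [imageWeightMatrix, of_apply, ← hσ', smul_smul]
  exact (Fintype.sum_equiv (Equiv.mulRight σ) _ _ fun π => by
    rw [Equiv.coe_mulRight, hw π σ hσA]).symm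

theorem typeMatrix_mul_submatrix_imageWeightMatrix
    (hw : ∀ π, ∀ σ ∈ stabilizer (Perm α) A, w (π * σ) = w π) {j : ℕ}
    {r : Fin (#A + 1) → Set.powersetCard α j} (hr : ∀ t, interType A (r t) = t) :
    typeMatrix A K j * (imageWeightMatrix w j).submatrix r id = imageWeightMatrix w j := by
  ext X Z
  simp only [mul_apply, typeMatrix, of_apply, submatrix_apply, id, ite_mul, one_mul, zero_mul,
    sum_ite_eq, mem_univ, if_true]
  exact imageWeightMatrix_apply_eq_of_interType_eq hw (hr _) Z

theorem trace_imageWeightMatrix_succ [CharZero K]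
    (hw : ∀ π, ∀ σ ∈ stabilizer (Perm α) A, w (π * σ) = w π) {j : ℕ} (hA : #A ≤ j)
    (hAc : j + 1 ≤ #Aᶜ) :
    trace (imageWeightMatrix w (j + 1)) = trace (imageWeightMatrix w j) := by
  obtain ⟨r, hr⟩ := (interType_surjective A hA (by omega)).hasRightInverse
  obtain ⟨r', hr'⟩ := (interType_surjective A (by omega) hAc).hasRightInverse
  set G := imageWeightMatrix w j
  set G' := imageWeightMatrix w (j + 1)
  set E := typeMatrix A K j
  set E' := typeMatrix A K (j + 1)
  set U := inclusionMatrix α K j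
  set M := typeInclusionMatrix A K j
  have hG : E * G.submatrix r id = G := typeMatrix_mul_submatrix_imageWeightMatrix hw hr
  have hG' : E' * G'.submatrix r' id = G' := typeMatrix_mul_submatrix_imageWeightMatrix hw hr'
  have hE'r' : E'.submatrix r' id = 1 := typeMatrix_submatrix_eq_one K hr'
  have hUE : U * E = E' * M := inclusionMatrix_mul_typeMatrix A K j
  have hGU : G' * U = U * G := imageWeightMatrix_mul_inclusionMatrix w j
  have hM : IsUnit M.det := isUnit_det_typeInclusionMatrix A K hA
  have hE' : E' = U * E * M⁻¹ := by
    rw [hUE, Matrix.mul_assoc, mul_nonsing_inv _ hM, Matrix.mul_one]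
  have hRU : G'.submatrix r' id * U = M * G.submatrix r id := calc
    G'.submatrix r' id * U = (G' * U).submatrix r' id := by
      rw [submatrix_mul _ _ _ id _ Function.bijective_id, submatrix_id_id]
    _ = (U * E * G.submatrix r id).submatrix r' id := by rw [hGU, Matrix.mul_assoc, hG]
    _ = E'.submatrix r' id * (M * G.submatrix r id) := by
      rw [hUE, Matrix.mul_assoc, submatrix_mul _ _ _ id _ Function.bijective_id, submatrix_id_id]
    _ = M * G.submatrix r id := by rw [hE'r', Matrix.one_mul]
  calc trace G' = trace (U * (E * M⁻¹ * G'.submatrix r' id)) := by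
        conv_lhs => rw [← hG', hE']
        simp only [Matrix.mul_assoc]
    _ = trace (E * (M⁻¹ * M) * G.submatrix r id) := by
        rw [trace_mul_comm]
        simp only [Matrix.mul_assoc, hRU]
    _ = trace G := by rw [nonsing_inv_mul _ hM, Matrix.mul_one, hG]

theorem sum_mul_numFixedSubsets_succ_of_mul_right [CharZero K]
    (hw : ∀ π, ∀ σ ∈ stabilizer (Perm α) A, w (π * σ) = w π) {j : ℕ} (hA : #A ≤ j)
    (hAc : j + 1 ≤ #Aᶜ) :
    ∑ π, w π * numFixedSubsets (j + 1) π = ∑ π, w π * numFixedSubsets j π := by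
  simpa only [trace_imageWeightMatrix] using trace_imageWeightMatrix_succ hw hA hAc

theorem sum_mul_numFixedSubsets_succ_of_mul_left [CharZero K]
    (hw : ∀ π, ∀ σ ∈ stabilizer (Perm α) A, w (σ * π) = w π) {j : ℕ} (hA : #A ≤ j)
    (hAc : j + 1 ≤ #Aᶜ) :
    ∑ π, w π * numFixedSubsets (j + 1) π = ∑ π, w π * numFixedSubsets j π := by
  have hinv (i : ℕ) : ∑ π, w π * numFixedSubsets i π = ∑ π, w π⁻¹ * numFixedSubsets i π := by
    rw [← Equiv.sum_comp (Equiv.inv (Perm α))]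
    simp only [Equiv.inv_apply, numFixedSubsets_inv]
  rw [hinv, hinv]
  exact sum_mul_numFixedSubsets_succ_of_mul_right
    (fun π σ hσ => by rw [_root_.mul_inv_rev, hw _ _ (inv_mem hσ)]) hA hAc

end Invariant

theorem restricted_character_sum_vanishes_general (n d : ℕ) (hd : 2 * d ≤ n)
    (c : ℕ → Equiv.Perm (Fin n) → ℕ)
    (hc : ∀ j π, c j π =
      (Finset.univ.filter fun A : Finset (Fin n) => A.card = j ∧ A.image π = A).card)
    (chi : Equiv.Perm (Fin n) → ℝ)
    (hchi : ∀ π, chi π = (c d π : ℝ) - (if d = 0 then 0 else (c (d - 1) π : ℝ)))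
    (a b : ℕ) (hab : min a b < d)
    (A B : Finset (Fin n)) (hA : A.card = a) (hB : B.card = b)
    (k : ℕ) :
    ∑ π ∈ Finset.univ.filter
        (fun π : Equiv.Perm (Fin n) => ((A.image π) ∩ B).card = k), chi π = 0 := by
  obtain ⟨j, rfl⟩ : ∃ j, d = j + 1 := Nat.exists_eq_add_one.mpr (by omega)
  have hchi' (π : Perm (Fin n)) :
      chi π = numFixedSubsets (j + 1) π - numFixedSubsets j π := by
    rw [hchi, if_neg j.succ_ne_zero, Nat.add_sub_cancel, hc, hc]
    rfl
  set w : Perm (Fin n) → ℝ := fun π => if #(π • A ∩ B) = k then 1 else 0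
  have hsum : ∑ π ∈ univ.filter (fun π : Perm (Fin n) => #(A.image π ∩ B) = k), chi π =
      ∑ π, w π * numFixedSubsets (j + 1) π - ∑ π, w π * numFixedSubsets j π := by
    rw [sum_filter, ← sum_sub_distrib]
    refine sum_congr rfl fun π _ => ?_
    rw [← mul_sub, ← hchi']
    exact (boole_mul _ _).symm
  have hcompl (C : Finset (Fin n)) (hC : #C < j + 1) : j + 1 ≤ #Cᶜ := by
    rw [card_compl, Fintype.card_fin]
    omega
  rw [hsum, sub_eq_zero]
  rcases min_lt_iff.mp hab with hAd | hBd
  · refine sum_mul_numFixedSubsets_succ_of_mul_right (A := A) (fun π σ hσ => ?_) (by omega)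
      (hcompl A (by omega))
    simp only [w, mul_smul, mem_stabilizer_iff.mp hσ]
  · refine sum_mul_numFixedSubsets_succ_of_mul_left (A := B) (fun π σ hσ => ?_) (by omega)
      (hcompl B (by omega))
    have hcard : #((σ * π) • A ∩ B) = #(π • A ∩ B) := by
      conv_lhs =>
        rw [mul_smul, ← mem_stabilizer_iff.mp hσ, ← smul_finset_inter, card_smul_finset]
    simp only [w, hcard]

/-- Partial character sums (vanishing case `min(a,b) < d` of Lemma 2.10): for
`|A| = a ≤ d`, `|B| = b ≤ d` with `min(a,b) < d`, and `0 ≤ k ≤ min(a,b)`,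
`∑_{π : |π(A) ∩ B| = k} χ_d(π) = 0`. -/
theorem restricted_character_sum_vanishes (n d : ℕ) (hn : 2 ≤ n) (hd : 2 * d ≤ n)
    (c : ℕ → Equiv.Perm (Fin n) → ℕ)
    (hc : ∀ j π, c j π =
      (Finset.univ.filter fun A : Finset (Fin n) => A.card = j ∧ A.image π = A).card)
    (chi : Equiv.Perm (Fin n) → ℝ)
    (hchi : ∀ π, chi π = (c d π : ℝ) - (if d = 0 then 0 else (c (d - 1) π : ℝ)))
    (a b : ℕ) (ha : a ≤ d) (hb : b ≤ d) (hab : min a b < d)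
    (A B : Finset (Fin n)) (hA : A.card = a) (hB : B.card = b)
    (k : ℕ) (hk : k ≤ min a b) :
    ∑ π ∈ Finset.univ.filter
        (fun π : Equiv.Perm (Fin n) => ((A.image π) ∩ B).card = k), chi π = 0 :=
  restricted_character_sum_vanishes_general n d hd c hc chi hchi a b hab A B hA hB k
end

section
/- Let n ≥ 1 and let π be a permutation of {1,…,n}. For 0 ≤ a, b ≤ n and 0 ≤ k, ℓ ≤ min(a,b), define f_{a,k}(π) = #{A ⊆ {1,…,n} : |A| = a, |π(A) ∩ A| = k} and g_{a,b,k,ℓ}(π) = #{(A,B) : A, B ⊆ {1,…,n}, |A| = a, |B| = b, |A ∩ B| = k, |π(A) ∩ B| = ℓ}. Then g_{b,a,k,ℓ}(π) = g_{a,b,k,ℓ}(π) = g_{a,b,ℓ,k}(π) = ∑_{j=0}^{a} [ ∑_{i=0}^{j} C(j,i)·C(a−j,k−i)·C(a−j,ℓ−i)·C(n−2a+j, b−k−ℓ+i) ] · f_{a,j}(π), where binomial coefficients with out-of-range arguments are zero. -/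
/-- Binomial coefficient with integer arguments, zero when an argument is out of range. -/
def intChoose (m t : ℤ) : ℕ := if 0 ≤ t ∧ t ≤ m then m.toNat.choose t.toNat else 0

/-!
Fix `A` with `|A| = a`, put `P = π(A)` and `j = |A ∩ P|`. The Venn regions `A ∩ P`, `A \ P`,
`P \ A` and `(A ∪ P)ᶜ` have sizes `j`, `a - j`, `a - j`, `n - 2a + j`, and a set `B` is
determined by its traces on them. If `B` meets `A ∩ P` in `i` points, the conditions on `B`
prescribe the four trace sizes `i`, `k - i`, `ℓ - i`, `b - k - ℓ + i`. Summing over `i`, and then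
over `A` grouped by `j`, gives the formula, which is visibly symmetric in `k` and `ℓ`. Exchanging
`a` and `b` is the bijection `(A, B) ↦ (B, π(A))`, which also exchanges `k` and `ℓ`.
-/

open Finset

lemma intChoose_natCast (m t : ℕ) : intChoose m t = m.choose t := by
  unfold intChoose
  split_ifs with h
  · simp
  · exact (Nat.choose_eq_zero_of_lt (by omega)).symm

lemma intChoose_of_neg {m t : ℤ} (ht : t < 0) : intChoose m t = 0 := by
  unfold intChoose
  rw [if_neg]
  omega

section Fibers

variable {α ι : Type*} [Fintype α] [DecidableEq α] [Fintype ι] [DecidableEq ι] (r : α → ι)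

theorem card_filter_forall_card_fiber_eq (c : ι → ℕ) :
    #{B : Finset α | ∀ t, #{x ∈ B | r x = t} = c t} = ∏ t, (#{x | r x = t}).choose (c t) := by
  simp_rw [← card_powersetCard, ← Fintype.card_piFinset]
  have glue : ∀ F ∈ Fintype.piFinset fun t => powersetCard (c t) {x | r x = t},
      (fun t => ({x | x ∈ F (r x)} : Finset α).filter (r · = t)) = F := by
    intro F hF
    simp only [Fintype.mem_piFinset, mem_powersetCard, subset_iff, mem_filter, mem_univ,
      true_and] at hF
    funext t
    ext x
    simp only [mem_filter, mem_univ, true_and]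
    exact ⟨fun ⟨hx, hrx⟩ => hrx ▸ hx, fun hx => ⟨(hF t).1 hx ▸ hx, (hF t).1 hx⟩⟩
  refine card_nbij' (fun B t => {x ∈ B | r x = t}) (fun F => ({x | x ∈ F (r x)} : Finset α))
    (fun B hB => ?_) (fun F hF => ?_) (fun B _ => ?_) glue
  · simp only [coe_filter, mem_univ, true_and, Set.mem_ofPred_eq, mem_coe,
      Fintype.mem_piFinset, mem_powersetCard] at hB ⊢
    exact fun t => ⟨filter_subset_filter _ (subset_univ B), hB t⟩
  · have hF' := hF
    simp only [mem_coe, Fintype.mem_piFinset, mem_powersetCard] at hF'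
    simp only [coe_filter, mem_univ, true_and, Set.mem_ofPred_eq]
    exact fun t => (congrFun (glue F hF) t).symm ▸ (hF' t).2
  · ext x
    simp

/-- Prescribing a negative size makes both sides vanish, so infeasible size patterns need no
separate treatment. -/
theorem card_filter_forall_intCast_card_fiber_eq (c : ι → ℤ) :
    #{B : Finset α | ∀ t, (#{x ∈ B | r x = t} : ℤ) = c t} =
      ∏ t, intChoose #{x | r x = t} (c t) := by
  by_cases hc : ∀ t, 0 ≤ c t
  · have hc' : c = fun t => ((c t).toNat : ℤ) :=
      funext fun t => (Int.toNat_of_nonneg (hc t)).symm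
    rw [hc']
    simp_rw [Nat.cast_inj, intChoose_natCast]
    exact card_filter_forall_card_fiber_eq r _
  · push Not at hc
    obtain ⟨t, ht⟩ := hc
    rw [prod_eq_zero (mem_univ t) (intChoose_of_neg ht), card_eq_zero, filter_eq_empty_iff]
    intro B _ hB
    have := hB t
    omega

end Fibers

theorem card_filter_eq_card_filter_and_add {α : Type*} (s : Finset α) (p q : α → Prop)
    [DecidablePred p] [DecidablePred q] :
    #{x ∈ s | p x} = #{x ∈ s | p x ∧ q x} + #{x ∈ s | p x ∧ ¬q x} := by
  rw [← filter_filter, ← filter_filter, card_filter_add_card_filter_not]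

section Venn

variable {α : Type*} [DecidableEq α]

def vennRegion (A P : Finset α) (x : α) : Bool × Bool := (decide (x ∈ A), decide (x ∈ P))

variable (A P B : Finset α)

theorem card_inter_left_eq_sum_vennRegion :
    #(A ∩ B) = #{x ∈ B | vennRegion A P x = (true, true)} +
      #{x ∈ B | vennRegion A P x = (true, false)} := by
  simp only [vennRegion, Prod.mk.injEq, decide_eq_true_eq, decide_eq_false_iff_not]
  rw [inter_comm, ← filter_mem_eq_inter, card_filter_eq_card_filter_and_add _ _ (· ∈ P)]

theorem card_inter_right_eq_sum_vennRegion :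
    #(P ∩ B) = #{x ∈ B | vennRegion A P x = (true, true)} +
      #{x ∈ B | vennRegion A P x = (false, true)} := by
  simp only [vennRegion, Prod.mk.injEq, decide_eq_true_eq, decide_eq_false_iff_not]
  rw [inter_comm, ← filter_mem_eq_inter, card_filter_eq_card_filter_and_add _ _ (· ∈ A)]
  simp only [and_comm]

theorem card_eq_sum_vennRegion :
    #B = #{x ∈ B | vennRegion A P x = (true, true)} +
      #{x ∈ B | vennRegion A P x = (true, false)} +
      #{x ∈ B | vennRegion A P x = (false, true)} +
      #{x ∈ B | vennRegion A P x = (false, false)} := by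
  simp only [vennRegion, Prod.mk.injEq, decide_eq_true_eq, decide_eq_false_iff_not]
  rw [← card_filter_add_card_filter_not (s := B) (· ∈ A),
    card_filter_eq_card_filter_and_add _ _ (· ∈ P),
    card_filter_eq_card_filter_and_add _ (· ∉ A) (· ∈ P)]
  ring

end Venn

theorem card_filter_prod_eq_sum {α β : Type*} [Fintype α] [Fintype β] (p : α × β → Prop)
    [DecidablePred p] :
    #{x : α × β | p x} = ∑ A, #{B | p (A, B)} := by
  simp only [card_filter, Fintype.sum_prod_type]

variable {α : Type*} [Fintype α] [DecidableEq α]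

theorem card_filter_card_inter_eq_sum {A P : Finset α} {a p j : ℕ} (hA : #A = a) (hP : #P = p)
    (hj : #(A ∩ P) = j) (b k ℓ : ℕ) :
    #{B : Finset α | #B = b ∧ #(A ∩ B) = k ∧ #(P ∩ B) = ℓ} =
      ∑ i ∈ range (j + 1), j.choose i * intChoose ((a : ℤ) - j) ((k : ℤ) - i) *
        intChoose ((p : ℤ) - j) ((ℓ : ℤ) - i) *
          intChoose ((Fintype.card α : ℤ) - a - p + j) ((b : ℤ) - k - ℓ + i) := by
  have hA' := card_inter_left_eq_sum_vennRegion A P univ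
  have hP' := card_inter_right_eq_sum_vennRegion A P univ
  have hN := card_eq_sum_vennRegion A P univ
  simp only [inter_univ, card_univ] at hA' hP' hN
  have hj' : #{x | vennRegion A P x = (true, true)} = j := by
    rw [← hj]
    congr 1
    ext x
    simp [vennRegion]
  rw [card_eq_sum_card_fiberwise (f := fun B => #{x ∈ B | vennRegion A P x = (true, true)})
    (t := range (j + 1))]
  swap
  · intro B _
    rw [mem_coe, mem_range, Nat.lt_succ_iff, ← hj']
    exact card_le_card (filter_subset_filter _ (subset_univ B))
  refine sum_congr rfl fun i _ => ?_
  let c : Bool × Bool → ℤ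
    | (true, true) => i
    | (true, false) => k - i
    | (false, true) => ℓ - i
    | (false, false) => b - k - ℓ + i
  rw [filter_filter, filter_congr (q := fun B => ∀ t, (#{x ∈ B | vennRegion A P x = t} : ℤ) = c t),
    card_filter_forall_intCast_card_fiber_eq, Fintype.prod_prod_type, Fintype.prod_bool,
    Fintype.prod_bool, Fintype.prod_bool]
  · have h10 : (#{x | vennRegion A P x = (true, false)} : ℤ) = a - j := by omega
    have h01 : (#{x | vennRegion A P x = (false, true)} : ℤ) = p - j := by omega
    have h00 : (#{x | vennRegion A P x = (false, false)} : ℤ) =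
        Fintype.card α - a - p + j := by omega
    rw [hj', h10, h01, h00, intChoose_natCast]
    ring
  · intro B _
    have := card_inter_left_eq_sum_vennRegion A P B
    have := card_inter_right_eq_sum_vennRegion A P B
    have := card_eq_sum_vennRegion A P B
    simp only [Prod.forall, Bool.forall_bool, c]
    omega

theorem card_pairs_eq_sum (σ : Equiv.Perm α) (a b k ℓ : ℕ) :
    #{AB : Finset α × Finset α | #AB.1 = a ∧ #AB.2 = b ∧ #(AB.1 ∩ AB.2) = k ∧
        #(AB.1.image σ ∩ AB.2) = ℓ} =
      ∑ j ∈ range (a + 1),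
        (∑ i ∈ range (j + 1), j.choose i * intChoose ((a : ℤ) - j) ((k : ℤ) - i) *
          intChoose ((a : ℤ) - j) ((ℓ : ℤ) - i) *
            intChoose ((Fintype.card α : ℤ) - 2 * a + j) ((b : ℤ) - k - ℓ + i)) *
        #{A : Finset α | #A = a ∧ #(A.image σ ∩ A) = j} := by
  have hsize : ∀ A : Finset α,
      #{B : Finset α | #A = a ∧ #B = b ∧ #(A ∩ B) = k ∧ #(A.image σ ∩ B) = ℓ} =
        if #A = a then #{B : Finset α | #B = b ∧ #(A ∩ B) = k ∧ #(A.image σ ∩ B) = ℓ}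
        else 0 := by
    intro A
    split_ifs with hA <;> simp [hA]
  rw [card_filter_prod_eq_sum]
  simp only [hsize]
  rw [← sum_filter,
    ← sum_fiberwise_of_maps_to (g := fun A => #(A.image σ ∩ A)) (t := range (a + 1))]
  swap
  · intro A hA
    rw [mem_filter] at hA
    rw [mem_range, Nat.lt_succ_iff, ← hA.2]
    exact card_le_card inter_subset_right
  refine sum_congr rfl fun j _ => ?_
  rw [filter_filter, sum_const_nat (m := _) fun A hA => ?_, mul_comm]
  rw [mem_filter] at hA
  rw [card_filter_card_inter_eq_sum (p := a) (j := j) hA.2.1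
    ((card_image_of_injective _ σ.injective).trans hA.2.1) (by rw [inter_comm, hA.2.2]),
    two_mul, sub_add_eq_sub_sub]

theorem card_pairs_swap (σ : Equiv.Perm α) (a b k ℓ : ℕ) :
    #{AB : Finset α × Finset α | #AB.1 = b ∧ #AB.2 = a ∧ #(AB.1 ∩ AB.2) = k ∧
        #(AB.1.image σ ∩ AB.2) = ℓ} =
      #{AB : Finset α × Finset α | #AB.1 = a ∧ #AB.2 = b ∧ #(AB.1 ∩ AB.2) = ℓ ∧
        #(AB.1.image σ ∩ AB.2) = k} := by
  refine card_equiv ((Equiv.prodComm _ _).trans ((Equiv.refl _).prodCongr σ.finsetCongr))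
    fun AB => ?_
  simp only [mem_filter, mem_univ, true_and, Equiv.trans_apply, Equiv.prodComm_apply,
    Prod.fst_swap, Prod.snd_swap, Equiv.prodCongr_apply, Prod.map, Equiv.refl_apply,
    Equiv.finsetCongr_apply, map_eq_image, Equiv.coe_toEmbedding,
    ← image_inter _ _ σ.injective, card_image_of_injective _ σ.injective, inter_comm AB.2]
  tauto

theorem g_symm_and_g_eq_comb_f_general (n : ℕ) (π : Equiv.Perm (Fin n))
    (f : ℕ → ℕ → Equiv.Perm (Fin n) → ℕ)
    (hf : ∀ a k σ, f a k σ = (Finset.univ.filter fun A : Finset (Fin n) =>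
      A.card = a ∧ (A.image σ ∩ A).card = k).card)
    (g : ℕ → ℕ → ℕ → ℕ → Equiv.Perm (Fin n) → ℕ)
    (hg : ∀ a b k ℓ σ, g a b k ℓ σ =
      (Finset.univ.filter fun AB : Finset (Fin n) × Finset (Fin n) =>
        AB.1.card = a ∧ AB.2.card = b ∧ (AB.1 ∩ AB.2).card = k ∧
          (AB.1.image σ ∩ AB.2).card = ℓ).card)
    (a b k ℓ : ℕ) :
    g b a k ℓ π = g a b k ℓ π ∧
    g a b k ℓ π = g a b ℓ k π ∧
    g a b k ℓ π = ∑ j ∈ Finset.range (a + 1),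
      (∑ i ∈ Finset.range (j + 1),
        j.choose i * intChoose ((a : ℤ) - j) ((k : ℤ) - i) *
          intChoose ((a : ℤ) - j) ((ℓ : ℤ) - i) *
            intChoose ((n : ℤ) - 2 * a + j) ((b : ℤ) - k - ℓ + i)) * f a j π := by
  have formula : ∀ k ℓ, g a b k ℓ π = ∑ j ∈ range (a + 1),
      (∑ i ∈ range (j + 1),
        j.choose i * intChoose ((a : ℤ) - j) ((k : ℤ) - i) *
          intChoose ((a : ℤ) - j) ((ℓ : ℤ) - i) *
            intChoose ((n : ℤ) - 2 * a + j) ((b : ℤ) - k - ℓ + i)) * f a j π := fun k ℓ => by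
    simpa only [hg, hf, Fintype.card_fin] using card_pairs_eq_sum π a b k ℓ
  have symm_inter : g a b k ℓ π = g a b ℓ k π := by
    rw [formula, formula]
    refine sum_congr rfl fun j _ => congrArg (· * f a j π) (sum_congr rfl fun i _ => ?_)
    rw [sub_right_comm (b : ℤ) k]
    ring
  refine ⟨?_, symm_inter, formula k ℓ⟩
  rw [hg, card_pairs_swap, ← hg, symm_inter]

/-- Proposition A.2: the pair-counting class functions `g_{a,b,k,ℓ}` are symmetric and are
integer combinations of the single-set counting functions `f_{a,j}`. -/
theorem g_symm_and_g_eq_comb_f (n : ℕ) (hn : 1 ≤ n) (π : Equiv.Perm (Fin n))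
    (f : ℕ → ℕ → Equiv.Perm (Fin n) → ℕ)
    (hf : ∀ a k σ, f a k σ = (Finset.univ.filter fun A : Finset (Fin n) =>
      A.card = a ∧ (A.image σ ∩ A).card = k).card)
    (g : ℕ → ℕ → ℕ → ℕ → Equiv.Perm (Fin n) → ℕ)
    (hg : ∀ a b k ℓ σ, g a b k ℓ σ =
      (Finset.univ.filter fun AB : Finset (Fin n) × Finset (Fin n) =>
        AB.1.card = a ∧ AB.2.card = b ∧ (AB.1 ∩ AB.2).card = k ∧
          (AB.1.image σ ∩ AB.2).card = ℓ).card)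
    (a b k ℓ : ℕ) (ha : a ≤ n) (hb : b ≤ n) (hk : k ≤ min a b) (hℓ : ℓ ≤ min a b) :
    g b a k ℓ π = g a b k ℓ π ∧
    g a b k ℓ π = g a b ℓ k π ∧
    g a b k ℓ π = ∑ j ∈ Finset.range (a + 1),
      (∑ i ∈ Finset.range (j + 1),
        j.choose i * intChoose ((a : ℤ) - j) ((k : ℤ) - i) *
          intChoose ((a : ℤ) - j) ((ℓ : ℤ) - i) *
            intChoose ((n : ℤ) - 2 * a + j) ((b : ℤ) - k - ℓ + i)) * f a j π :=
  g_symm_and_g_eq_comb_f_general n π f hf g hg a b k ℓ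
end

section
/- Let 0 ≤ k ≤ a ≤ d with 2d ≤ n. For a permutation π of {1,…,n} let c_j(π) be the number of j-element subsets A with π(A) = A (with c_{−1} = 0), set χ_d = c_d − c_{d−1}, and let f_{a,k}(π) = #{A ⊆ {1,…,n} : |A| = a, |π(A) ∩ A| = k}. Then (1/n!) ∑_{π ∈ S_n} χ_d(π) · f_{a,k}(π) equals 0 if a < d, and equals (−1)^{d+k} · C(d,k) if a = d. -/
/-!
By Burnside's lemma, `∑_π c_j(π) c_b(π)` is `n!` times the number of orbits of `S_n` on pairs
(`j`-set, `b`-set); an orbit is determined by the size of the intersection, so for `j + b ≤ n` this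
is `n! (min j b + 1)`. Since `f_{b,b} = c_b`, this gives `∑_π χ_d(π) f_{b,b}(π) = n! [b = d]` for
`b ≤ d`. Double counting pairs `K ⊆ π(A) ∩ A` shows that `∑_k C(k,r) f_{a,k}` is a combination of
the `f_{r,s}`; as `k ↦ C(k,r)` is unitriangular, induction on `a` determines all the sums
`∑_π χ_d(π) f_{a,k}(π)`, the value at `a = d` coming from `∑_i (-1)^i C(i,r) C(d,i) = 0`
for `r < d`.
-/

open Finset Equiv MulAction
open scoped Pointwise

lemma Finset.sum_range_mul_card_filter_eq {β : Type*} (s : Finset β) (h : β → ℕ) {m : ℕ}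
    (hm : ∀ x ∈ s, h x ≤ m) (g : ℕ → ℕ) :
    ∑ k ∈ range (m + 1), g k * #{x ∈ s | h x = k} = ∑ x ∈ s, g (h x) := by
  rw [← sum_fiberwise_of_maps_to fun x hx => mem_range.2 (Nat.lt_succ_of_le (hm x hx))]
  refine sum_congr rfl fun k _ => ?_
  rw [sum_const_nat fun x hx => by rw [(mem_filter.1 hx).2], mul_comm]

lemma sum_range_choose_self_mul {R : Type*} [Semiring R] (u : ℕ → R) (a : ℕ) :
    ∑ i ∈ range (a + 1), (i.choose a : R) * u i = u a := by
  rw [sum_range_succ, Nat.choose_self, Nat.cast_one, one_mul, sum_eq_zero fun i hi => by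
    rw [Nat.choose_eq_zero_of_lt (mem_range.1 hi), Nat.cast_zero, zero_mul], zero_add]

lemma eq_of_sum_range_choose_mul_eq {R : Type*} [Ring R] {u v : ℕ → R} {a : ℕ}
    (h : ∀ k ≤ a, ∑ i ∈ range (a + 1), (i.choose k : R) * u i =
      ∑ i ∈ range (a + 1), (i.choose k : R) * v i) {k : ℕ} (hk : k ≤ a) : u k = v k := by
  suffices ∀ m, ∀ k ≤ a, a - k = m → u k = v k from this _ k hk rfl
  intro m
  induction m using Nat.strong_induction_on with
  | _ m ih =>
    rintro k hk rfl
    have hsum := h k hk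
    rw [← sub_eq_zero, ← sum_sub_distrib,
      sum_eq_single_of_mem k (mem_range.2 (Nat.lt_succ_of_le hk)) fun i hi hik => ?_] at hsum
    · simpa only [Nat.choose_self, Nat.cast_one, one_mul, sub_eq_zero] using hsum
    rcases lt_or_gt_of_ne hik with hlt | hgt
    · simp [Nat.choose_eq_zero_of_lt hlt]
    · have hia := Nat.lt_succ_iff.1 (mem_range.1 hi)
      rw [ih (a - i) (by omega) i hia rfl, sub_self]

lemma Int.alternating_sum_range_choose_mul_choose {d k : ℕ} (hk : k < d) :
    ∑ i ∈ Finset.range (d + 1), ((-1) ^ i * i.choose k * d.choose i : ℤ) = 0 := by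
  have hshift : ∀ j, ((-1) ^ (k + j) * (k + j).choose k * d.choose (k + j) : ℤ) =
      (-1) ^ k * d.choose k * ((-1) ^ j * (d - k).choose j) := fun j => by
    have := Nat.choose_mul (n := d) (Nat.le_add_right k j)
    rw [add_tsub_cancel_left] at this
    rw [pow_add, mul_assoc _ _ (d.choose _ : ℤ), mul_comm ((k + j).choose k : ℤ), ← Nat.cast_mul,
      this]
    push_cast
    ring
  rw [← sum_range_add_sum_Ico _ (by omega : k ≤ d + 1),
    sum_eq_zero fun i hi => by simp [Nat.choose_eq_zero_of_lt (mem_range.1 hi)], zero_add,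
    sum_Ico_eq_sum_range, sum_congr rfl fun j _ => hshift j, ← mul_sum,
    show d + 1 - k = d - k + 1 by omega, Int.alternating_sum_range_choose_of_ne (by omega),
    mul_zero]

lemma MulAction.card_fixedBy_prod {G X Y : Type*} [Monoid G] [MulAction G X] [MulAction G Y]
    (g : G) : Nat.card (fixedBy (X × Y) g) = Nat.card (fixedBy X g) * Nat.card (fixedBy Y g) := by
  rw [← Nat.card_prod]
  exact Nat.card_congr <| (Equiv.subtypeEquivRight fun p => by
    simp only [mem_fixedBy, Prod.ext_iff, Prod.smul_fst, Prod.smul_snd]).trans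
    Equiv.subtypeProdEquivProd

lemma Equiv.Perm.exists_comp_eq_of_card_fiber_eq_s14 {α ι : Type*} [Fintype α] [DecidableEq ι]
    (f g : α → ι) (h : ∀ i, #{x | f x = i} = #{x | g x = i}) :
    ∃ σ : Perm α, ∀ x, g (σ x) = f x := by
  refine ⟨Equiv.ofFiberEquiv fun i => Fintype.equivOfCardEq ?_, Equiv.ofFiberEquiv_map _⟩
  simpa only [Fintype.card_subtype] using h i

lemma Finset.card_inv_smul_finset_union {α G : Type*} [DecidableEq α] [Group G] [MulAction G α]
    (g : G) (K : Finset α) : #(g⁻¹ • K ∪ K) = 2 * #K - #(g • K ∩ K) := by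
  have hinter : #(g⁻¹ • K ∩ K) = #(g • K ∩ K) := by
    rw [← card_smul_finset g, smul_finset_inter, smul_inv_smul, inter_comm]
  have hle : #(g • K ∩ K) ≤ #K := card_le_card inter_subset_right
  rw [card_union, hinter, card_smul_finset]
  omega

variable {α : Type*} [Fintype α] [DecidableEq α]

lemma Finset.card_filter_mem_and_mem_eq (A B : Finset α) :
    #{x | x ∈ A ∧ x ∈ B} = #(A ∩ B) ∧
    #{x | x ∈ A ∧ x ∉ B} = #A - #(A ∩ B) ∧
    #{x | x ∉ A ∧ x ∈ B} = #B - #(A ∩ B) ∧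
    #{x | x ∉ A ∧ x ∉ B} = Fintype.card α - (#A + #B - #(A ∩ B)) := by
  refine ⟨by congr 1; ext; simp, ?_, ?_, ?_⟩
  · rw [← card_sdiff_of_subset inter_subset_left]; congr 1; ext; simp
  · rw [← card_sdiff_of_subset inter_subset_right]; congr 1; ext; simp [and_comm]
  · rw [← card_union, ← card_compl]; congr 1; ext; simp

lemma Equiv.Perm.exists_smul_eq_smul_eq {A B A' B' : Finset α} (hA : #A = #A') (hB : #B = #B')
    (hAB : #(A ∩ B) = #(A' ∩ B')) : ∃ σ : Perm α, σ • A = A' ∧ σ • B = B' := by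
  obtain ⟨σ, hσ⟩ := Perm.exists_comp_eq_of_card_fiber_eq_s14
    (fun x => (decide (x ∈ A), decide (x ∈ B))) (fun x => (decide (x ∈ A'), decide (x ∈ B'))) <| by
      obtain ⟨h₁, h₂, h₃, h₄⟩ := card_filter_mem_and_mem_eq A B
      obtain ⟨h₁', h₂', h₃', h₄'⟩ := card_filter_mem_and_mem_eq A' B'
      rintro ⟨_ | _, _ | _⟩ <;>
        simp only [Prod.mk.injEq, decide_eq_true_eq, decide_eq_false_iff_not] <;> omega
  have hmem : ∀ {C C' : Finset α}, (∀ x, (σ x ∈ C') = (x ∈ C)) → σ • C = C' := by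
    intro C C' h
    ext y
    obtain ⟨x, rfl⟩ := σ.surjective y
    rw [← Perm.smul_def, smul_mem_smul_finset_iff, Perm.smul_def, h]
  exact ⟨σ, hmem fun x => by simpa using congrArg Prod.fst (hσ x),
    hmem fun x => by simpa using congrArg Prod.snd (hσ x)⟩

lemma Finset.exists_card_eq_card_eq_card_inter_eq {j b i : ℕ} (hij : i ≤ j) (hib : i ≤ b)
    (hjb : j + b ≤ Fintype.card α + i) : ∃ s t : Finset α, #s = j ∧ #t = b ∧ #(s ∩ t) = i := by
  obtain ⟨s, -, hs⟩ := exists_subset_card_eq (s := (univ : Finset α)) (n := j) (by simp; omega)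
  obtain ⟨u, hus, hu⟩ := exists_subset_card_eq (s := s) (n := i) (by omega)
  obtain ⟨v, hvs, hv⟩ := exists_subset_card_eq (s := sᶜ) (n := b - i) (by rw [card_compl]; omega)
  have hdisj : Disjoint u v := disjoint_of_subset_left hus (subset_compl_iff_disjoint_left.1 hvs)
  refine ⟨s, u ∪ v, hs, by rw [card_union_of_disjoint hdisj]; omega, ?_⟩
  rw [inter_union_distrib_left, inter_eq_right.2 hus,
    disjoint_iff_inter_eq_empty.1 (subset_compl_iff_disjoint_left.1 hvs), union_empty, hu]

lemma card_orbitRel_quotient_powersetCard_prod {j b : ℕ} (hjb : j + b ≤ Fintype.card α) :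
    Nat.card (orbitRel.Quotient (Perm α) (Set.powersetCard α j × Set.powersetCard α b)) =
      min j b + 1 := by
  let overlap : Set.powersetCard α j × Set.powersetCard α b → Fin (min j b + 1) := fun p =>
    ⟨#((p.1 : Finset α) ∩ p.2), Nat.lt_succ_of_le <| le_min
      ((card_le_card inter_subset_left).trans (Set.powersetCard.card_eq p.1).le)
      ((card_le_card inter_subset_right).trans (Set.powersetCard.card_eq p.2).le)⟩
  let Φ : orbitRel.Quotient (Perm α) _ → Fin (min j b + 1) := Quotient.lift overlap <| by
    rintro _ p ⟨σ, rfl⟩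
    simp only [overlap, Prod.smul_fst, Prod.smul_snd, Set.powersetCard.coe_smul,
      ← smul_finset_inter, card_smul_finset]
  have hΦ : Function.Bijective Φ := by
    constructor
    · rintro ⟨p⟩ ⟨q⟩ h
      obtain ⟨σ, h₁, h₂⟩ := Perm.exists_smul_eq_smul_eq
        (by simp only [Set.powersetCard.card_eq]) (by simp only [Set.powersetCard.card_eq])
        (congrArg Fin.val h).symm
      exact Quotient.sound ⟨σ, Prod.ext (Subtype.ext h₁) (Subtype.ext h₂)⟩
    · rintro ⟨i, hi⟩
      obtain ⟨s, t, hs, ht, hst⟩ := exists_card_eq_card_eq_card_inter_eq (α := α) (j := j) (b := b)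
        ((Nat.lt_succ_iff.1 hi).trans (min_le_left j b))
        ((Nat.lt_succ_iff.1 hi).trans (min_le_right j b)) (by omega)
      exact ⟨⟦(⟨s, hs⟩, ⟨t, ht⟩)⟧, Fin.ext hst⟩
  rw [Nat.card_congr (Equiv.ofBijective Φ hΦ), Nat.card_eq_fintype_card, Fintype.card_fin]

lemma Finset.card_filter_superset_powersetCard (S : Finset α) {a : ℕ} (ha : a ≤ Fintype.card α) :
    #{A ∈ powersetCard a univ | S ⊆ A} = (Fintype.card α - #S).choose (Fintype.card α - a) := by
  rw [← card_compl, ← card_powersetCard]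
  refine card_nbij' compl compl (fun A hA => ?_) (fun T hT => ?_)
    (fun A _ => compl_compl A) (fun T _ => compl_compl T)
  · simp only [coe_filter, mem_powersetCard, subset_univ, true_and, Set.mem_ofPred_eq,
      mem_coe] at hA ⊢
    exact ⟨compl_subset_compl.2 hA.2, by rw [card_compl, hA.1]⟩
  · simp only [coe_filter, mem_powersetCard, subset_univ, true_and, Set.mem_ofPred_eq,
      mem_coe] at hT ⊢
    exact ⟨by rw [card_compl, hT.2]; omega, subset_compl_comm.1 hT.1⟩

def invariantCount (j : ℕ) (π : Perm α) : ℕ := #{A : Finset α | #A = j ∧ A.image π = A}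

lemma card_fixedBy_powersetCard (j : ℕ) (π : Perm α) :
    Nat.card (fixedBy (Set.powersetCard α j) π) = invariantCount j π := by
  rw [invariantCount, ← Fintype.card_subtype, ← Nat.card_eq_fintype_card]
  exact Nat.card_congr <| (Equiv.subtypeEquivRight fun s => by
    rw [mem_fixedBy, ← Subtype.coe_inj, Set.powersetCard.coe_smul]; rfl).trans
    (Equiv.subtypeSubtypeEquivSubtypeInter _ fun A : Finset α => A.image π = A)

lemma sum_invariantCount_mul_invariantCount {j b : ℕ} (hjb : j + b ≤ Fintype.card α) :
    ∑ π : Perm α, invariantCount j π * invariantCount b π =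
      (min j b + 1) * (Fintype.card α).factorial := by
  classical
  have burnside := sum_card_fixedBy_eq_card_orbits_mul_card_group (Perm α)
    (Set.powersetCard α j × Set.powersetCard α b)
  simp only [← Nat.card_eq_fintype_card, card_fixedBy_prod, card_fixedBy_powersetCard,
    card_orbitRel_quotient_powersetCard_prod hjb] at burnside
  rwa [Nat.card_perm, Nat.card_eq_fintype_card] at burnside

def overlapCount (a k : ℕ) (π : Perm α) : ℕ := #{A : Finset α | #A = a ∧ #(A.image π ∩ A) = k}

lemma overlapCount_eq (a k : ℕ) (π : Perm α) :
    overlapCount a k π = #{A ∈ powersetCard a (univ : Finset α) | #(π • A ∩ A) = k} := by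
  rw [overlapCount]
  congr 1
  ext A
  simp only [mem_filter, mem_univ, true_and, mem_powersetCard_univ]
  rfl

lemma overlapCount_self (a : ℕ) (π : Perm α) : overlapCount a a π = invariantCount a π := by
  refine congrArg card <| filter_congr fun A _ => and_congr_right fun hA => ?_
  subst hA
  refine ⟨fun h => ?_, fun h => by rw [h, inter_self]⟩
  have hA : A ⊆ A.image π :=
    inter_eq_right.1 (eq_of_subset_of_card_le inter_subset_right h.ge)
  exact (eq_of_subset_of_card_le hA (card_image_of_injective A π.injective).le).symm

/-- Both sides count the pairs `(A, K)` with `#A = a`, `#K = r` and `K ⊆ π(A) ∩ A`; for fixed `K`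
these are the `a`-supersets of `π⁻¹(K) ∪ K`. -/
lemma sum_choose_mul_overlapCount (π : Perm α) {a : ℕ} (r : ℕ) (ha : a ≤ Fintype.card α) :
    ∑ k ∈ range (a + 1), k.choose r * overlapCount a k π =
      ∑ s ∈ range (r + 1),
        (Fintype.card α - (2 * r - s)).choose (Fintype.card α - a) * overlapCount r s π := by
  have hle : ∀ m, ∀ A ∈ powersetCard m (univ : Finset α), #(π • A ∩ A) ≤ m := fun m A hA =>
    (card_le_card inter_subset_right).trans (mem_powersetCard_univ.1 hA).le
  simp only [overlapCount_eq]
  rw [sum_range_mul_card_filter_eq _ _ (hle a), sum_range_mul_card_filter_eq _ _ (hle r)]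
  calc ∑ A ∈ powersetCard a univ, (#(π • A ∩ A)).choose r
      = ∑ A ∈ powersetCard a univ, #{K ∈ powersetCard r univ | K ⊆ π • A ∩ A} := by
        refine sum_congr rfl fun A _ => ?_
        rw [← card_powersetCard]
        congr 1
        ext K
        simp only [mem_powersetCard, mem_filter, subset_univ, true_and]
        exact and_comm
    _ = ∑ K ∈ powersetCard r univ, #{A ∈ powersetCard a univ | K ⊆ π • A ∩ A} :=
        sum_card_bipartiteAbove_eq_sum_card_bipartiteBelow _
    _ = _ := by
        refine sum_congr rfl fun K hK => ?_
        have hsub : ∀ A : Finset α, K ⊆ π • A ∩ A ↔ π⁻¹ • K ∪ K ⊆ A := fun A => by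
          rw [subset_inter_iff, union_subset_iff, subset_smul_finset_iff]
        rw [filter_congr fun A _ => hsub A, card_filter_superset_powersetCard _ ha,
          card_inv_smul_finset_union, mem_powersetCard_univ.1 hK]

def twoRowCharacter (d : ℕ) (π : Perm α) : ℝ :=
  (invariantCount d π : ℝ) - if d = 0 then 0 else (invariantCount (d - 1) π : ℝ)

lemma sum_twoRowCharacter_mul_invariantCount {d b : ℕ} (hd : 2 * d ≤ Fintype.card α)
    (hb : b ≤ d) :
    ∑ π : Perm α, twoRowCharacter d π * invariantCount b π =
      if b = d then ((Fintype.card α).factorial : ℝ) else 0 := by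
  have hinner : ∀ j ≤ d, ∑ π : Perm α, (invariantCount j π : ℝ) * invariantCount b π =
      (min j b + 1 : ℕ) * ((Fintype.card α).factorial : ℝ) := fun j hj => by
    exact_mod_cast sum_invariantCount_mul_invariantCount (by omega)
  rcases Nat.eq_zero_or_pos d with rfl | hd0
  · obtain rfl : b = 0 := Nat.le_zero.1 hb
    simp [twoRowCharacter, hinner]
  simp only [twoRowCharacter, if_neg hd0.ne', sub_mul, sum_sub_distrib, hinner d le_rfl,
    hinner (d - 1) (Nat.sub_le d 1)]
  rcases eq_or_lt_of_le hb with rfl | hlt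
  · rw [min_self, min_eq_left (Nat.sub_le b 1), Nat.sub_add_cancel hd0, if_pos rfl]
    push_cast
    ring
  · rw [min_eq_right hb, min_eq_right (by omega), sub_self, if_neg hlt.ne]

lemma sum_choose_mul_sum_overlapCount (w : Perm α → ℝ) {a : ℕ} (r : ℕ)
    (ha : a ≤ Fintype.card α) :
    ∑ k ∈ range (a + 1), (k.choose r : ℝ) * ∑ π : Perm α, w π * overlapCount a k π =
      ∑ s ∈ range (r + 1), ((Fintype.card α - (2 * r - s)).choose (Fintype.card α - a) : ℝ) *
        ∑ π : Perm α, w π * overlapCount r s π := by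
  simp only [mul_sum]
  rw [sum_comm, sum_comm (s := range (r + 1))]
  refine sum_congr rfl fun π _ => ?_
  have := congrArg (fun m : ℕ => w π * m) (sum_choose_mul_overlapCount π r ha)
  simp only [Nat.cast_sum, Nat.cast_mul, mul_sum] at this
  simpa only [mul_left_comm (w π)] using this

theorem sum_twoRowCharacter_mul_overlapCount {d a k : ℕ} (hd : 2 * d ≤ Fintype.card α)
    (had : a ≤ d) (hka : k ≤ a) :
    ∑ π : Perm α, twoRowCharacter d π * overlapCount a k π =
      if a = d then (-1) ^ (d + k) * d.choose k * ((Fintype.card α).factorial : ℝ) else 0 := by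
  induction a using Nat.strong_induction_on generalizing k with
  | _ a ih =>
    refine eq_of_sum_range_choose_mul_eq
      (u := fun k => ∑ π : Perm α, twoRowCharacter d π * overlapCount a k π)
      (v := fun k => if a = d then (-1) ^ (d + k) * d.choose k * ((Fintype.card α).factorial : ℝ)
        else 0) (fun r hr => ?_) hka
    rcases eq_or_lt_of_le hr with rfl | hra
    · simp only [sum_range_choose_self_mul, overlapCount_self,
        sum_twoRowCharacter_mul_invariantCount hd had]
      split_ifs with h
      · rw [h, ← two_mul, pow_mul, neg_one_sq, one_pow, Nat.choose_self]
        push_cast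
        ring
      · rfl
    · rw [sum_choose_mul_sum_overlapCount _ r (by omega), sum_eq_zero fun s hs => by
        rw [ih r hra (by omega) (Nat.lt_succ_iff.1 (mem_range.1 hs)), if_neg (by omega), mul_zero]]
      split_ifs with h
      · subst h
        have hbinom :=
          congrArg (Int.cast : ℤ → ℝ) (Int.alternating_sum_range_choose_mul_choose hra)
        push_cast at hbinom
        rw [eq_comm, ← mul_zero ((-1 : ℝ) ^ a * (Fintype.card α).factorial), ← hbinom, mul_sum]
        exact sum_congr rfl fun i _ => by ring
      · simp

/-- The inner product of the two-row character `χ_d = c_d − c_{d−1}` with the counting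
function `f_{a,k}` vanishes when `a < d` and equals `(−1)^{d+k} C(d,k)` when `a = d`. -/
theorem character_f_inner_product (n d : ℕ) (hd : 2 * d ≤ n)
    (c : ℕ → Equiv.Perm (Fin n) → ℕ)
    (hc : ∀ j π, c j π =
      (Finset.univ.filter fun A : Finset (Fin n) => A.card = j ∧ A.image π = A).card)
    (chi : Equiv.Perm (Fin n) → ℝ)
    (hchi : ∀ π, chi π = (c d π : ℝ) - (if d = 0 then 0 else (c (d - 1) π : ℝ)))
    (f : ℕ → ℕ → Equiv.Perm (Fin n) → ℕ)
    (hf : ∀ a k σ, f a k σ = (Finset.univ.filter fun A : Finset (Fin n) =>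
      A.card = a ∧ (A.image σ ∩ A).card = k).card)
    (a k : ℕ) (hka : k ≤ a) (had : a ≤ d) :
    (a < d →
      (1 / (n.factorial : ℝ)) * ∑ π : Equiv.Perm (Fin n), chi π * (f a k π : ℝ) = 0) ∧
    (a = d →
      (1 / (n.factorial : ℝ)) * ∑ π : Equiv.Perm (Fin n), chi π * (f a k π : ℝ) =
        (-1) ^ (d + k) * (d.choose k : ℝ)) := by
  obtain rfl : c = invariantCount := funext₂ hc
  obtain rfl : chi = twoRowCharacter d := funext hchi
  obtain rfl : f = overlapCount := funext₃ hf
  have hsum := sum_twoRowCharacter_mul_overlapCount (α := Fin n) (by simpa using hd) had hka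
  rw [Fintype.card_fin] at hsum
  refine ⟨fun hlt => by rw [hsum, if_neg hlt.ne, mul_zero], fun heq => ?_⟩
  rw [hsum, if_pos heq]
  field_simp
end

section
/- Let n ≥ 1, let π be a permutation of {1,…,n}, and let 0 ≤ j ≤ a ≤ n. Let f_{j,i}(π) = #{C ⊆ {1,…,n} : |C| = j, |π(C) ∩ C| = i}. Then ∑_{A ⊆ {1,…,n}, |A| = a} C(|A ∩ π(A)|, j) = ∑_{i=0}^{j} C(n−2j+i, a−2j+i) · f_{j,i}(π), where binomial coefficients with out-of-range arguments are zero. -/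
open Finset

theorem intChoose_sub_sub {m d a : ℕ} (hd : d ≤ m) (ha : a ≤ m) :
    intChoose (m - d) (a - d) = (m - d).choose (m - a) := by
  unfold intChoose
  by_cases hda : d ≤ a
  · rw [if_pos (by omega), show ((m : ℤ) - d).toNat = m - d by omega,
      show ((a : ℤ) - d).toNat = a - d by omega, ← Nat.choose_symm (by omega : a - d ≤ m - d)]
    congr 1; omega
  · rw [if_neg (by omega), Nat.choose_eq_zero_of_lt (by omega)]

theorem sum_choose_card_eq_sum_card_filter_subset {ι α : Type*} [Fintype α] [DecidableEq α]
    (s : Finset ι) (F : ι → Finset α) (j : ℕ) :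
    ∑ x ∈ s, (#(F x)).choose j = ∑ C : Finset α with #C = j, #{x ∈ s | C ⊆ F x} := by
  refine Eq.trans (sum_congr rfl fun x _ => ?_)
    (sum_card_bipartiteAbove_eq_sum_card_bipartiteBelow (fun x C => C ⊆ F x))
  rw [← card_powersetCard, bipartiteAbove]
  congr 1
  ext C
  simp [mem_powersetCard, and_comm]

section Perm

variable {α : Type*} [DecidableEq α]

theorem card_filter_card_eq_and_subset [Fintype α] (D : Finset α) {a : ℕ}
    (ha : a ≤ Fintype.card α) :
    #{A : Finset α | #A = a ∧ D ⊆ A} = (Fintype.card α - #D).choose (Fintype.card α - a) := by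
  rw [← card_compl, ← card_powersetCard]
  refine card_nbij' compl compl (fun A hA => ?_) (fun B hB => ?_) (fun _ _ => compl_compl _)
    (fun _ _ => compl_compl _)
  · simp only [coe_filter, mem_univ, true_and, Set.mem_ofPred_eq, mem_coe,
      mem_powersetCard] at hA ⊢
    exact ⟨compl_subset_compl.mpr hA.2, by rw [card_compl, hA.1]⟩
  · simp only [coe_filter, mem_univ, true_and, Set.mem_ofPred_eq, mem_coe,
      mem_powersetCard] at hB ⊢
    exact ⟨by rw [card_compl, hB.2]; omega, subset_compl_comm.mp hB.1⟩

theorem subset_image_perm_iff (σ : Equiv.Perm α) {A C : Finset α} :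
    C ⊆ A.image σ ↔ C.image σ.symm ⊆ A := by
  simp only [subset_iff, mem_image]
  refine ⟨fun h x hx => ?_,
    fun h x hx => ⟨σ.symm x, h ⟨x, hx, rfl⟩, σ.apply_symm_apply x⟩⟩
  obtain ⟨y, hy, rfl⟩ := hx
  obtain ⟨z, hz, rfl⟩ := h hy
  simpa using hz

theorem card_union_image_symm_add_card_image_inter (σ : Equiv.Perm α) (C : Finset α) :
    #(C ∪ C.image σ.symm) + #(C.image σ ∩ C) = 2 * #C := by
  have hinter : #(C.image σ ∩ C) = #(C ∩ C.image σ.symm) := by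
    rw [← card_image_of_injective _ σ.symm.injective, image_inter _ _ σ.symm.injective]
    simp [image_image]
  rw [hinter, card_union_add_card_inter, card_image_of_injective _ σ.symm.injective, two_mul]

theorem card_filter_subset_inter_image [Fintype α] (σ : Equiv.Perm α) (C : Finset α) {a : ℕ}
    (ha : a ≤ Fintype.card α) :
    #{A : Finset α | #A = a ∧ C ⊆ A ∩ A.image σ} =
      intChoose (Fintype.card α - 2 * #C + #(C.image σ ∩ C)) (a - 2 * #C + #(C.image σ ∩ C)) := by
  have hunion := card_union_image_symm_add_card_image_inter σ C
  have hle : #(C ∪ C.image σ.symm) ≤ Fintype.card α := card_le_univ _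
  have hsub (A : Finset α) : C ⊆ A ∩ A.image σ ↔ C ∪ C.image σ.symm ⊆ A := by
    rw [subset_inter_iff, subset_image_perm_iff, union_subset_iff]
  simp only [hsub]
  rw [card_filter_card_eq_and_subset _ ha, ← intChoose_sub_sub hle ha]
  congr 1 <;> omega

end Perm

theorem sum_choose_inter_image_eq_general (n : ℕ) (π : Equiv.Perm (Fin n))
    (a j : ℕ) (han : a ≤ n)
    (f : ℕ → ℕ → Equiv.Perm (Fin n) → ℕ)
    (hf : ∀ b k σ, f b k σ = (Finset.univ.filter fun C : Finset (Fin n) =>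
      C.card = b ∧ (C.image σ ∩ C).card = k).card) :
    ∑ A ∈ Finset.univ.filter (fun A : Finset (Fin n) => A.card = a),
        (A ∩ A.image π).card.choose j =
      ∑ i ∈ Finset.range (j + 1),
        intChoose ((n : ℤ) - 2 * j + i) ((a : ℤ) - 2 * j + i) * f j i π := by
  have hmaps (C) (hC : C ∈ ({C | #C = j} : Finset (Finset (Fin n)))) :
      #(C.image π ∩ C) ∈ range (j + 1) :=
    mem_range_succ_iff.mpr ((card_le_card inter_subset_right).trans (mem_filter.mp hC).2.le)
  calc _ = ∑ C : Finset (Fin n) with #C = j,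
          #{A : Finset (Fin n) | #A = a ∧ C ⊆ A ∩ A.image π} := by
        simp only [sum_choose_card_eq_sum_card_filter_subset, filter_filter]
    _ = ∑ C : Finset (Fin n) with #C = j,
          intChoose (n - 2 * j + #(C.image π ∩ C)) (a - 2 * j + #(C.image π ∩ C)) :=
        sum_congr rfl fun C hC => by
          rw [card_filter_subset_inter_image π C (by simpa using han), (mem_filter.mp hC).2,
            Fintype.card_fin]
    _ = _ := by
        rw [← sum_fiberwise_of_maps_to' hmaps
          fun i : ℕ => intChoose (n - 2 * j + i) (a - 2 * j + i)]
        refine sum_congr rfl fun i _ => ?_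
        rw [sum_const, smul_eq_mul, hf, filter_filter, mul_comm]

/-- The counting identity `∑_{|A|=a} C(|A ∩ π(A)|, j) = ∑_{i=0}^{j} C(n−2j+i, a−2j+i) f_{j,i}(π)`
from the proof of Proposition A.3. -/
theorem sum_choose_inter_image_eq (n : ℕ) (hn : 1 ≤ n) (π : Equiv.Perm (Fin n))
    (a j : ℕ) (hja : j ≤ a) (han : a ≤ n)
    (f : ℕ → ℕ → Equiv.Perm (Fin n) → ℕ)
    (hf : ∀ b k σ, f b k σ = (Finset.univ.filter fun C : Finset (Fin n) =>
      C.card = b ∧ (C.image σ ∩ C).card = k).card) :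
    ∑ A ∈ Finset.univ.filter (fun A : Finset (Fin n) => A.card = a),
        (A ∩ A.image π).card.choose j =
      ∑ i ∈ Finset.range (j + 1),
        intChoose ((n : ℤ) - 2 * j + i) ((a : ℤ) - 2 * j + i) * f j i π :=
  sum_choose_inter_image_eq_general n π a j han f hf
end
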